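/- arXiv:1102.0405 — 6 statements merged into one kernel-verified Lean document; each statement's English description precedes it below -/
import Mathlib

section
/- Suppose h is a strictly positive continuous weight function on (0,1) with 0 < B_h = ∫₀¹ (log y)² h(y) dy < ∞, and C is a copula with C ≥ Π. Then M_h(C,A*) = 0 (where A* is the minimizer of M_h(C,·)) if and only if there exists a function A: [0,1] → ℝ such that C(y^{1-t},y^t) = y^{A(t)} for all t ∈ [0,1] and almost every y ∈ (0,1). -/
/-!
Write `q(t, y) = log C(y^(1-t), y^t) / log y`, so that `C(y^(1-t), y^t) = y^q(t, y)`; the bounds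
`Π ≤ C ≤ 1` give `q ∈ [0, 1]`. With the weight `w(y) = (log y)² h(y)` the inner integral of
`M_h(C, A)` is `∫ (q(t, y) - A(t))² w(y) dy`, and `A*(t)` is the `w`-weighted mean of `q(t, ·)`,
so `M_h(C, A*)` integrates over `t` the weighted variance of `q(t, ·)`. Copulas are Lipschitz,
so `q` is continuous in `t`, and by dominated convergence this variance is a continuous,
nonnegative function of `t`: its integral vanishes iff it vanishes for every `t`, i.e. iff every
`q(t, ·)` is a.e. constant.
-/

open MeasureTheory Set intervalIntegral

def IsCopula (C : ℝ → ℝ → ℝ) : Prop :=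
  (∀ u ∈ Set.Icc (0:ℝ) 1, C u 0 = 0 ∧ C u 1 = u) ∧
  (∀ v ∈ Set.Icc (0:ℝ) 1, C 0 v = 0 ∧ C 1 v = v) ∧
  (∀ u₁ u₂ v₁ v₂ : ℝ, u₁ ∈ Set.Icc (0:ℝ) 1 → u₂ ∈ Set.Icc (0:ℝ) 1 →
    v₁ ∈ Set.Icc (0:ℝ) 1 → v₂ ∈ Set.Icc (0:ℝ) 1 → u₁ ≤ u₂ → v₁ ≤ v₂ →
    0 ≤ C u₂ v₂ - C u₂ v₁ - C u₁ v₂ + C u₁ v₁)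

noncomputable def Mdist (h : ℝ → ℝ) (C : ℝ → ℝ → ℝ) (A : ℝ → ℝ) : ℝ :=
  ∫ t in (0:ℝ)..1, ∫ y in (0:ℝ)..1,
    (Real.log (C (y ^ (1 - t)) (y ^ t)) - A t * Real.log y) ^ 2 * h y

lemma sq_sub_le_one_of_mem_Icc {x y : ℝ} (hx : x ∈ Icc (0:ℝ) 1) (hy : y ∈ Icc (0:ℝ) 1) :
    (x - y) ^ 2 ≤ 1 := by
  nlinarith [hx.1, hx.2, hy.1, hy.2]

lemma ContinuousOn.intervalIntegral_eq_zero_iff {g : ℝ → ℝ} {a b : ℝ} (hab : a < b)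
    (hg : ContinuousOn g (Icc a b)) (hg₀ : ∀ t ∈ Icc a b, 0 ≤ g t) :
    ∫ t in a..b, g t = 0 ↔ EqOn g 0 (Icc a b) := by
  have hg₀' : 0 ≤ᵐ[volume.restrict (Ioc a b)] g :=
    ae_restrict_of_forall_mem measurableSet_Ioc fun t ht => hg₀ t (Ioc_subset_Icc_self ht)
  rw [integral_eq_zero_iff_of_le_of_nonneg_ae hab.le hg₀' (hg.intervalIntegrable_of_Icc hab.le),
    Measure.restrict_congr_set Ioc_ae_eq_Icc]
  exact ⟨fun h => Measure.eqOn_Icc_of_ae_eq volume hab.ne h hg continuousOn_const,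
    fun h => ae_restrict_of_forall_mem measurableSet_Icc h⟩

section WeightedMean

variable {α : Type*} [MeasurableSpace α] {μ : Measure α} {w : α → ℝ}

noncomputable def weightedMean (μ : Measure α) (w f : α → ℝ) : ℝ :=
  (∫ x, w x ∂μ)⁻¹ * ∫ x, f x * w x ∂μ

noncomputable def weightedVariance (μ : Measure α) (w f : α → ℝ) : ℝ :=
  ∫ x, (f x - weightedMean μ w f) ^ 2 * w x ∂μ

lemma weightedMean_eq_of_ae_eq_const (hmass : ∫ x, w x ∂μ ≠ 0) {f : α → ℝ} {c : ℝ}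
    (hf : ∀ᵐ x ∂μ, f x = c) : weightedMean μ w f = c := by
  have hfw : ∫ x, f x * w x ∂μ = ∫ x, c * w x ∂μ :=
    integral_congr_ae (hf.mono fun x hx => by simp only [hx])
  rw [weightedMean, hfw, MeasureTheory.integral_const_mul, mul_left_comm,
    inv_mul_cancel₀ hmass, mul_one]

lemma weightedMean_mem_Icc (hw : 0 ≤ᵐ[μ] w) (hwi : Integrable w μ) {f : α → ℝ}
    (hfm : AEStronglyMeasurable f μ) (hf : ∀ᵐ x ∂μ, f x ∈ Icc (0:ℝ) 1) :
    weightedMean μ w f ∈ Icc (0:ℝ) 1 := by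
  have hfw : Integrable (fun x => f x * w x) μ :=
    hwi.bdd_mul (c := 1) hfm (hf.mono fun x hx => by rw [Real.norm_of_nonneg hx.1]; exact hx.2)
  have h₀ : 0 ≤ ∫ x, f x * w x ∂μ := integral_nonneg_of_ae <| by
    filter_upwards [hw, hf] with x hwx hfx using mul_nonneg hfx.1 hwx
  have h₁ : ∫ x, f x * w x ∂μ ≤ ∫ x, w x ∂μ := integral_mono_ae hfw hwi <| by
    filter_upwards [hw, hf] with x hwx hfx using mul_le_of_le_one_left hwx hfx.2
  have hmass : 0 ≤ ∫ x, w x ∂μ := integral_nonneg_of_ae hw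
  exact ⟨mul_nonneg (inv_nonneg.mpr hmass) h₀, inv_mul_le_one_of_le₀ h₁ hmass⟩

lemma weightedVariance_nonneg (hw : 0 ≤ᵐ[μ] w) (f : α → ℝ) : 0 ≤ weightedVariance μ w f :=
  integral_nonneg_of_ae <| hw.mono fun _ hx => mul_nonneg (sq_nonneg _) hx

lemma weightedVariance_eq_zero_iff (hw : ∀ᵐ x ∂μ, 0 < w x) (hwi : Integrable w μ)
    (hmass : 0 < ∫ x, w x ∂μ) {f : α → ℝ} (hfm : AEStronglyMeasurable f μ)
    (hf : ∀ᵐ x ∂μ, f x ∈ Icc (0:ℝ) 1) :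
    weightedVariance μ w f = 0 ↔ ∃ c, ∀ᵐ x ∂μ, f x = c := by
  have hw₀ : 0 ≤ᵐ[μ] w := hw.mono fun x hx => hx.le
  constructor
  · intro hvar
    set m := weightedMean μ w f
    have hm := weightedMean_mem_Icc hw₀ hwi hfm hf
    have hint : Integrable (fun x => (f x - m) ^ 2 * w x) μ :=
      hwi.bdd_mul ((hfm.sub aestronglyMeasurable_const).pow 2) <| hf.mono fun x hx => by
        rw [Real.norm_of_nonneg (sq_nonneg _)]; exact sq_sub_le_one_of_mem_Icc hx hm
    have hzero := (integral_eq_zero_iff_of_nonneg_ae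
      (hw₀.mono fun x hx => mul_nonneg (sq_nonneg _) hx) hint).mp hvar
    refine ⟨m, ?_⟩
    filter_upwards [hzero, hw] with x hx hwx
    have : (f x - m) ^ 2 = 0 := (mul_eq_zero.mp hx).resolve_right hwx.ne'
    exact sub_eq_zero.mp (pow_eq_zero_iff two_ne_zero |>.mp this)
  · rintro ⟨c, hc⟩
    rw [weightedVariance, weightedMean_eq_of_ae_eq_const hmass.ne' hc]
    exact integral_eq_zero_of_ae <| hc.mono fun x hx => by simp [hx]

variable {X : Type*} [TopologicalSpace X] [FirstCountableTopology X] {s : Set X}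

lemma continuousOn_integral_mul_of_norm_le {f : X → α → ℝ} {c : ℝ} (hwi : Integrable w μ)
    (hfm : ∀ t ∈ s, AEStronglyMeasurable (f t) μ) (hfc : ∀ t ∈ s, ∀ᵐ x ∂μ, ‖f t x‖ ≤ c)
    (hcont : ∀ᵐ x ∂μ, ContinuousOn (fun t => f t x) s) :
    ContinuousOn (fun t => ∫ x, f t x * w x ∂μ) s :=
  continuousOn_of_dominated (bound := fun x => c * ‖w x‖) (fun t ht => (hfm t ht).mul hwi.1)
    (fun t ht => (hfc t ht).mono fun x hx => by
      rw [norm_mul]; exact mul_le_mul_of_nonneg_right hx (norm_nonneg _))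
    (hwi.norm.const_mul c) (hcont.mono fun x hx => hx.mul continuousOn_const)

lemma continuousOn_weightedVariance (hw : 0 ≤ᵐ[μ] w) (hwi : Integrable w μ) {f : X → α → ℝ}
    (hfm : ∀ t ∈ s, AEStronglyMeasurable (f t) μ)
    (hf : ∀ t ∈ s, ∀ᵐ x ∂μ, f t x ∈ Icc (0:ℝ) 1)
    (hcont : ∀ᵐ x ∂μ, ContinuousOn (fun t => f t x) s) :
    ContinuousOn (fun t => weightedVariance μ w (f t)) s := by
  have hmean : ContinuousOn (fun t => weightedMean μ w (f t)) s :=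
    continuousOn_const.mul <| continuousOn_integral_mul_of_norm_le (c := 1) hwi hfm
      (fun t ht => (hf t ht).mono fun x hx => by
        rw [Real.norm_of_nonneg hx.1]; exact hx.2) hcont
  refine continuousOn_integral_mul_of_norm_le (c := 1) hwi
    (fun t ht => ((hfm t ht).sub aestronglyMeasurable_const).pow 2)
    (fun t ht => (hf t ht).mono fun x hx => ?_) (hcont.mono fun x hx => (hx.sub hmean).pow 2)
  rw [Real.norm_of_nonneg (sq_nonneg _)]
  exact sq_sub_le_one_of_mem_Icc hx (weightedMean_mem_Icc hw hwi (hfm t ht) (hf t ht))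

theorem intervalIntegral_weightedVariance_eq_zero_iff (hw : ∀ᵐ x ∂μ, 0 < w x)
    (hwi : Integrable w μ) (hmass : 0 < ∫ x, w x ∂μ) {f : ℝ → α → ℝ} {a b : ℝ} (hab : a < b)
    (hfm : ∀ t ∈ Icc a b, AEStronglyMeasurable (f t) μ)
    (hf : ∀ t ∈ Icc a b, ∀ᵐ x ∂μ, f t x ∈ Icc (0:ℝ) 1)
    (hcont : ∀ᵐ x ∂μ, ContinuousOn (fun t => f t x) (Icc a b)) :
    ∫ t in a..b, weightedVariance μ w (f t) = 0 ↔
      ∀ t ∈ Icc a b, ∃ c, ∀ᵐ x ∂μ, f t x = c := by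
  have hw₀ : 0 ≤ᵐ[μ] w := hw.mono fun x hx => hx.le
  rw [ContinuousOn.intervalIntegral_eq_zero_iff hab
    (continuousOn_weightedVariance hw₀ hwi hfm hf hcont)
    (fun t _ => weightedVariance_nonneg hw₀ _)]
  exact forall₂_congr fun t ht => weightedVariance_eq_zero_iff hw hwi hmass (hfm t ht) (hf t ht)

end WeightedMean

namespace IsCopula

variable {C : ℝ → ℝ → ℝ}

lemma swap (hC : IsCopula C) : IsCopula (fun u v => C v u) :=
  ⟨hC.2.1, hC.1, fun u₁ u₂ v₁ v₂ hu₁ hu₂ hv₁ hv₂ hu hv => by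
    linarith [hC.2.2 v₁ v₂ u₁ u₂ hv₁ hv₂ hu₁ hu₂ hv hu]⟩

lemma sub_mem_Icc_left (hC : IsCopula C) {u₁ u₂ v : ℝ} (hu₁ : u₁ ∈ Icc (0:ℝ) 1)
    (hu₂ : u₂ ∈ Icc (0:ℝ) 1) (hv : v ∈ Icc (0:ℝ) 1) (hu : u₁ ≤ u₂) :
    C u₂ v - C u₁ v ∈ Icc 0 (u₂ - u₁) := by
  have hzero : (0:ℝ) ∈ Icc (0:ℝ) 1 := ⟨le_rfl, zero_le_one⟩
  have hone : (1:ℝ) ∈ Icc (0:ℝ) 1 := ⟨zero_le_one, le_rfl⟩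
  have hlow := hC.2.2 u₁ u₂ 0 v hu₁ hu₂ hzero hv hu hv.1
  have hhigh := hC.2.2 u₁ u₂ v 1 hu₁ hu₂ hv hone hu hv.2
  rw [(hC.1 u₁ hu₁).1, (hC.1 u₂ hu₂).1] at hlow
  rw [(hC.1 u₁ hu₁).2, (hC.1 u₂ hu₂).2] at hhigh
  constructor <;> linarith

lemma abs_sub_le_left (hC : IsCopula C) {u₁ u₂ v : ℝ} (hu₁ : u₁ ∈ Icc (0:ℝ) 1)
    (hu₂ : u₂ ∈ Icc (0:ℝ) 1) (hv : v ∈ Icc (0:ℝ) 1) : |C u₁ v - C u₂ v| ≤ |u₁ - u₂| := by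
  wlog hu : u₁ ≤ u₂ generalizing u₁ u₂
  · rw [abs_sub_comm, abs_sub_comm u₁]
    exact this hu₂ hu₁ (le_of_not_ge hu)
  have hmem := hC.sub_mem_Icc_left hu₁ hu₂ hv hu
  rw [abs_sub_comm, abs_of_nonneg hmem.1, abs_sub_comm, abs_of_nonneg (sub_nonneg.mpr hu)]
  exact hmem.2

lemma le_one (hC : IsCopula C) {u v : ℝ} (hu : u ∈ Icc (0:ℝ) 1) (hv : v ∈ Icc (0:ℝ) 1) :
    C u v ≤ 1 := by
  have hmem := hC.swap.sub_mem_Icc_left hv ⟨zero_le_one, le_rfl⟩ hu hv.2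
  linarith [hmem.1, hu.2, (hC.1 u hu).2]

lemma lipschitzOnWith (hC : IsCopula C) :
    LipschitzOnWith 2 (Function.uncurry C) (Icc (0:ℝ) 1 ×ˢ Icc (0:ℝ) 1) := by
  refine LipschitzOnWith.of_dist_le_mul fun p hp q hq => ?_
  have hu := hC.abs_sub_le_left hp.1 hq.1 hp.2
  have hv := hC.swap.abs_sub_le_left hp.2 hq.2 hq.1
  simp only [Function.uncurry, Real.dist_eq, Prod.dist_eq, NNReal.coe_ofNat] at hu hv ⊢
  calc |C p.1 p.2 - C q.1 q.2| ≤ |C p.1 p.2 - C q.1 p.2| + |C q.1 p.2 - C q.1 q.2| :=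
        abs_sub_le _ _ _
    _ ≤ 2 * max |p.1 - q.1| |p.2 - q.2| := by
        linarith [le_max_left |p.1 - q.1| |p.2 - q.2|, le_max_right |p.1 - q.1| |p.2 - q.2|]

lemma continuousOn (hC : IsCopula C) :
    ContinuousOn (Function.uncurry C) (Icc (0:ℝ) 1 ×ˢ Icc (0:ℝ) 1) :=
  hC.lipschitzOnWith.continuousOn

end IsCopula

lemma rpow_mem_Icc_of_mem_Ioo {y s : ℝ} (hy : y ∈ Ioo (0:ℝ) 1) (hs : 0 ≤ s) :
    y ^ s ∈ Icc (0:ℝ) 1 :=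
  ⟨(Real.rpow_pos_of_pos hy.1 s).le, Real.rpow_le_one hy.1.le hy.2.le hs⟩

noncomputable def diagExponent (C : ℝ → ℝ → ℝ) (t y : ℝ) : ℝ :=
  Real.log (C (y ^ (1 - t)) (y ^ t)) / Real.log y

section DiagExponent

variable {C : ℝ → ℝ → ℝ} {t y : ℝ}

lemma self_le_diag (hPi : ∀ u ∈ Icc (0:ℝ) 1, ∀ v ∈ Icc (0:ℝ) 1, u * v ≤ C u v)
    (ht : t ∈ Icc (0:ℝ) 1) (hy : y ∈ Ioo (0:ℝ) 1) : y ≤ C (y ^ (1 - t)) (y ^ t) := by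
  have := hPi _ (rpow_mem_Icc_of_mem_Ioo hy (sub_nonneg.mpr ht.2)) _
    (rpow_mem_Icc_of_mem_Ioo hy ht.1)
  rwa [← Real.rpow_add hy.1, sub_add_cancel, Real.rpow_one] at this

lemma diagExponent_mem_Icc (hC : IsCopula C)
    (hPi : ∀ u ∈ Icc (0:ℝ) 1, ∀ v ∈ Icc (0:ℝ) 1, u * v ≤ C u v)
    (ht : t ∈ Icc (0:ℝ) 1) (hy : y ∈ Ioo (0:ℝ) 1) : diagExponent C t y ∈ Icc (0:ℝ) 1 := by
  have hlow := self_le_diag hPi ht hy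
  have hhigh := hC.le_one (rpow_mem_Icc_of_mem_Ioo hy (sub_nonneg.mpr ht.2))
    (rpow_mem_Icc_of_mem_Ioo hy ht.1)
  have hlog : Real.log y < 0 := Real.log_neg hy.1 hy.2
  exact ⟨div_nonneg_of_nonpos (Real.log_nonpos (hy.1.le.trans hlow) hhigh) hlog.le,
    (div_le_one_of_neg hlog).mpr (Real.log_le_log hy.1 hlow)⟩

lemma continuousOn_diagExponent (hC : IsCopula C)
    (hPi : ∀ u ∈ Icc (0:ℝ) 1, ∀ v ∈ Icc (0:ℝ) 1, u * v ≤ C u v) :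
    ContinuousOn (Function.uncurry (diagExponent C)) (Icc (0:ℝ) 1 ×ˢ Ioo (0:ℝ) 1) := by
  have hpow : ContinuousOn (fun p : ℝ × ℝ => (p.2 ^ (1 - p.1), p.2 ^ p.1))
      (Icc (0:ℝ) 1 ×ˢ Ioo (0:ℝ) 1) :=
    (continuousOn_snd.rpow (continuousOn_const.sub continuousOn_fst) fun p hp =>
      Or.inl hp.2.1.ne').prodMk
      (continuousOn_snd.rpow continuousOn_fst fun p hp => Or.inl hp.2.1.ne')
  have hdiag := hC.continuousOn.comp hpow fun p hp =>
    ⟨rpow_mem_Icc_of_mem_Ioo hp.2 (sub_nonneg.mpr hp.1.2), rpow_mem_Icc_of_mem_Ioo hp.2 hp.1.1⟩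
  refine (hdiag.log fun p hp => ?_).div (continuousOn_snd.log fun p hp => hp.2.1.ne')
    fun p hp => (Real.log_neg hp.2.1 hp.2.2).ne
  exact (hp.2.1.trans_le (self_le_diag hPi hp.1 hp.2)).ne'

lemma diag_eq_rpow_iff (hPi : ∀ u ∈ Icc (0:ℝ) 1, ∀ v ∈ Icc (0:ℝ) 1, u * v ≤ C u v)
    (ht : t ∈ Icc (0:ℝ) 1) (hy : y ∈ Ioo (0:ℝ) 1) {a : ℝ} :
    C (y ^ (1 - t)) (y ^ t) = y ^ a ↔ diagExponent C t y = a := by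
  have hdiag := hy.1.trans_le (self_le_diag hPi ht hy)
  rw [diagExponent, div_eq_iff (Real.log_neg hy.1 hy.2).ne, ← Real.log_rpow hy.1,
    Real.log_injOn_pos.eq_iff hdiag (Real.rpow_pos_of_pos hy.1 a)]

lemma ae_diag_eq_rpow_iff (hPi : ∀ u ∈ Icc (0:ℝ) 1, ∀ v ∈ Icc (0:ℝ) 1, u * v ≤ C u v)
    (ht : t ∈ Icc (0:ℝ) 1) {a : ℝ} :
    (∀ᵐ y ∂(volume.restrict (Ioo (0:ℝ) 1)), C (y ^ (1 - t)) (y ^ t) = y ^ a) ↔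
      ∀ᵐ y ∂(volume.restrict (Ioo (0:ℝ) 1)), diagExponent C t y = a :=
  Filter.eventually_congr <| ae_restrict_of_forall_mem measurableSet_Ioo fun _ hy =>
    diag_eq_rpow_iff hPi ht hy

end DiagExponent

lemma Mdist_eq_integral_weightedVariance {h : ℝ → ℝ} {C : ℝ → ℝ → ℝ} {A : ℝ → ℝ}
    (hA : ∀ t, A t = weightedMean (volume.restrict (Ioo (0:ℝ) 1))
      (fun y => Real.log y ^ 2 * h y) (diagExponent C t)) :
    Mdist h C A = ∫ t in (0:ℝ)..1, weightedVariance (volume.restrict (Ioo (0:ℝ) 1))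
      (fun y => Real.log y ^ 2 * h y) (diagExponent C t) := by
  refine integral_congr fun t _ => ?_
  rw [intervalIntegral.integral_of_le zero_le_one, integral_Ioc_eq_integral_Ioo,
    weightedVariance, ← hA t]
  refine setIntegral_congr_fun measurableSet_Ioo fun y hy => ?_
  have hlog : Real.log y ≠ 0 := (Real.log_neg hy.1 hy.2).ne
  simp only [diagExponent]
  field_simp

theorem stmt7_general (C : ℝ → ℝ → ℝ) (hC : IsCopula C)
    (hPi : ∀ u ∈ Set.Icc (0:ℝ) 1, ∀ v ∈ Set.Icc (0:ℝ) 1, u * v ≤ C u v)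
    (h : ℝ → ℝ)
    (hpos : ∀ y ∈ Set.Ioo (0:ℝ) 1, 0 < h y)
    (Bh : ℝ) (hBh : Bh = ∫ y in (0:ℝ)..1, (Real.log y) ^ 2 * h y) (hBpos : 0 < Bh)
    (hBfin : IntervalIntegrable (fun y => (Real.log y) ^ 2 * h y) volume 0 1)
    (Astar : ℝ → ℝ)
    (hAstar : ∀ t, Astar t =
      Bh⁻¹ * ∫ y in (0:ℝ)..1,
        (Real.log (C (y ^ (1 - t)) (y ^ t)) / Real.log y) * ((Real.log y) ^ 2 * h y)) :
    Mdist h C Astar = 0 ↔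
      ∃ A : ℝ → ℝ, ∀ t ∈ Set.Icc (0:ℝ) 1,
        ∀ᵐ y ∂(volume.restrict (Set.Ioo (0:ℝ) 1)),
          C (y ^ (1 - t)) (y ^ t) = y ^ (A t) := by
  set μ := volume.restrict (Ioo (0:ℝ) 1)
  set w : ℝ → ℝ := fun y => Real.log y ^ 2 * h y
  have hμ : ∀ f : ℝ → ℝ, ∫ y in (0:ℝ)..1, f y = ∫ y, f y ∂μ := fun f => by
    rw [intervalIntegral.integral_of_le zero_le_one, integral_Ioc_eq_integral_Ioo]
  have hw : ∀ᵐ y ∂μ, 0 < w y := ae_restrict_of_forall_mem measurableSet_Ioo fun y hy =>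
    mul_pos (sq_pos_of_neg (Real.log_neg hy.1 hy.2)) (hpos y hy)
  have hwi : Integrable w μ := hBfin.1.mono_set Ioo_subset_Ioc_self
  have hmass : 0 < ∫ y, w y ∂μ := by rwa [hBh, hμ] at hBpos
  have hdiag := continuousOn_diagExponent hC hPi
  rw [Mdist_eq_integral_weightedVariance fun t => by rw [hAstar, hBh, hμ, hμ]; rfl,
    intervalIntegral_weightedVariance_eq_zero_iff hw hwi hmass zero_lt_one
      (fun t ht => (hdiag.uncurry_left t ht).aestronglyMeasurable measurableSet_Ioo)
      (fun t ht => ae_restrict_of_forall_mem measurableSet_Ioo fun y hy =>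
        diagExponent_mem_Icc hC hPi ht hy)
      (ae_restrict_of_forall_mem measurableSet_Ioo fun y hy => hdiag.uncurry_right y hy)]
  constructor
  · intro hconst
    choose! A hA using hconst
    exact ⟨A, fun t ht => (ae_diag_eq_rpow_iff hPi ht).mpr (hA t ht)⟩
  · rintro ⟨A, hA⟩ t ht
    exact ⟨A t, (ae_diag_eq_rpow_iff hPi ht).mp (hA t ht)⟩

theorem stmt7 (C : ℝ → ℝ → ℝ) (hC : IsCopula C)
    (hPi : ∀ u ∈ Set.Icc (0:ℝ) 1, ∀ v ∈ Set.Icc (0:ℝ) 1, u * v ≤ C u v)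
    (h : ℝ → ℝ) (hcont : ContinuousOn h (Set.Ioo 0 1))
    (hpos : ∀ y ∈ Set.Ioo (0:ℝ) 1, 0 < h y)
    (Bh : ℝ) (hBh : Bh = ∫ y in (0:ℝ)..1, (Real.log y) ^ 2 * h y) (hBpos : 0 < Bh)
    (hBfin : IntervalIntegrable (fun y => (Real.log y) ^ 2 * h y) volume 0 1)
    (Astar : ℝ → ℝ)
    (hAstar : ∀ t, Astar t =
      Bh⁻¹ * ∫ y in (0:ℝ)..1,
        (Real.log (C (y ^ (1 - t)) (y ^ t)) / Real.log y) * ((Real.log y) ^ 2 * h y)) :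
    Mdist h C Astar = 0 ↔
      ∃ A : ℝ → ℝ, ∀ t ∈ Set.Icc (0:ℝ) 1,
        ∀ᵐ y ∂(volume.restrict (Set.Ioo (0:ℝ) 1)),
          C (y ^ (1 - t)) (y ^ t) = y ^ (A t) :=
  stmt7_general C hC hPi h hpos Bh hBh hBpos hBfin Astar hAstar
end

section
/- Let C be a copula such that for each y ∈ (0,1) the map t ↦ −log C(y^{1-t},y^t) is convex on [0,1]. Then for any nonnegative weight function h with B_h = ∫₀¹ (log y)² h(y) dy ∈ (0,∞), the best approximation A*(t) = B_h^{-1} ∫₀¹ (log C(y^{1-t},y^t)/log y)(log y)² h(y) dy is a convex function of t on [0,1]. -/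
/-! For `y ∈ (0,1)` we have `log y < 0`, so `t ↦ log C(y^{1-t}, y^t) / log y` is a positive
multiple of the convex function `t ↦ -log C(y^{1-t}, y^t)`, and convexity survives integration
against the nonnegative weight `(log y)² h(y)`. The integrands are measurable because a copula is
monotone in each argument, and integrable because the ratio lies in `[0,1]`: `C ≤ 1` gives the
lower bound, and convexity together with `C(y, 1) = C(1, y) = y` at the endpoints gives the
upper one. -/

open MeasureTheory Set intervalIntegral

theorem convexOn_integral {α E : Type*} [MeasurableSpace α] {μ : Measure α}
    [AddCommGroup E] [Module ℝ E] {s : Set E} {f : E → α → ℝ} (hs : Convex ℝ s)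
    (hf : ∀ᵐ y ∂μ, ConvexOn ℝ s fun t => f t y) (hint : ∀ t ∈ s, Integrable (f t) μ) :
    ConvexOn ℝ s fun t => ∫ y, f t y ∂μ := by
  refine ⟨hs, fun t₁ ht₁ t₂ ht₂ a b ha hb hab => ?_⟩
  have hint₁ : Integrable (fun y => a • f t₁ y) μ := (hint t₁ ht₁).smul a
  have hint₂ : Integrable (fun y => b • f t₂ y) μ := (hint t₂ ht₂).smul b
  calc ∫ y, f (a • t₁ + b • t₂) y ∂μ ≤ ∫ y, (a • f t₁ y + b • f t₂ y) ∂μ :=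
        integral_mono_ae (hint _ (hs ht₁ ht₂ ha hb hab)) (hint₁.add hint₂)
          (hf.mono fun y hy => hy.2 ht₁ ht₂ ha hb hab)
    _ = a • ∫ y, f t₁ y ∂μ + b • ∫ y, f t₂ y ∂μ := by
        rw [integral_add hint₁ hint₂, MeasureTheory.integral_smul, MeasureTheory.integral_smul]

lemma rpow_mem_Icc_zero_one {y c : ℝ} (hy : y ∈ Icc (0:ℝ) 1) (hc : 0 ≤ c) :
    y ^ c ∈ Icc (0:ℝ) 1 :=
  ⟨Real.rpow_nonneg hy.1 c, Real.rpow_le_one hy.1 hy.2 hc⟩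

namespace IsCopula

variable {C : ℝ → ℝ → ℝ}

lemma mono_left (hC : IsCopula C) {u₁ u₂ v : ℝ} (hu₁ : u₁ ∈ Icc (0:ℝ) 1)
    (hu₂ : u₂ ∈ Icc (0:ℝ) 1) (hv : v ∈ Icc (0:ℝ) 1) (hu : u₁ ≤ u₂) : C u₁ v ≤ C u₂ v := by
  have h0 : (0:ℝ) ∈ Icc (0:ℝ) 1 := ⟨le_rfl, zero_le_one⟩
  linarith [hC.2.2 u₁ u₂ 0 v hu₁ hu₂ h0 hv hu hv.1, (hC.1 u₁ hu₁).1, (hC.1 u₂ hu₂).1]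

lemma mono_right (hC : IsCopula C) {u v₁ v₂ : ℝ} (hu : u ∈ Icc (0:ℝ) 1)
    (hv₁ : v₁ ∈ Icc (0:ℝ) 1) (hv₂ : v₂ ∈ Icc (0:ℝ) 1) (hv : v₁ ≤ v₂) : C u v₁ ≤ C u v₂ := by
  have h0 : (0:ℝ) ∈ Icc (0:ℝ) 1 := ⟨le_rfl, zero_le_one⟩
  linarith [hC.2.2 0 u v₁ v₂ h0 hu hv₁ hv₂ hu.1 hv, (hC.2.1 v₁ hv₁).1, (hC.2.1 v₂ hv₂).1]

lemma nonneg (hC : IsCopula C) {u v : ℝ} (hu : u ∈ Icc (0:ℝ) 1) (hv : v ∈ Icc (0:ℝ) 1) :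
    0 ≤ C u v := by
  have h0 : (0:ℝ) ∈ Icc (0:ℝ) 1 := ⟨le_rfl, zero_le_one⟩
  linarith [hC.mono_left h0 hu hv hu.1, (hC.2.1 v hv).1]

lemma monotoneOn_rpow (hC : IsCopula C) {t : ℝ} (ht : t ∈ Icc (0:ℝ) 1) :
    MonotoneOn (fun y => C (y ^ (1 - t)) (y ^ t)) (Icc 0 1) := by
  intro y₁ hy₁ y₂ hy₂ hy
  have ht' : 0 ≤ 1 - t := sub_nonneg.2 ht.2
  calc C (y₁ ^ (1 - t)) (y₁ ^ t) ≤ C (y₂ ^ (1 - t)) (y₁ ^ t) :=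
        hC.mono_left (rpow_mem_Icc_zero_one hy₁ ht') (rpow_mem_Icc_zero_one hy₂ ht')
          (rpow_mem_Icc_zero_one hy₁ ht.1) (Real.rpow_le_rpow hy₁.1 hy ht')
    _ ≤ C (y₂ ^ (1 - t)) (y₂ ^ t) :=
        hC.mono_right (rpow_mem_Icc_zero_one hy₂ ht') (rpow_mem_Icc_zero_one hy₁ ht.1)
          (rpow_mem_Icc_zero_one hy₂ ht.1) (Real.rpow_le_rpow hy₁.1 hy ht.1)

lemma abs_log_div_log_le_one (hC : IsCopula C) {y t : ℝ} (hy : y ∈ Ioo (0:ℝ) 1)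
    (hconv : ConvexOn ℝ (Icc (0:ℝ) 1) fun t => -Real.log (C (y ^ (1 - t)) (y ^ t)))
    (ht : t ∈ Icc (0:ℝ) 1) :
    |Real.log (C (y ^ (1 - t)) (y ^ t)) / Real.log y| ≤ 1 := by
  have hyI : y ∈ Icc (0:ℝ) 1 := Ioo_subset_Icc_self hy
  have hu := rpow_mem_Icc_zero_one hyI (sub_nonneg.2 ht.2)
  have hv := rpow_mem_Icc_zero_one hyI ht.1
  have hlogC : Real.log (C (y ^ (1 - t)) (y ^ t)) ≤ 0 :=
    Real.log_nonpos (hC.nonneg hu hv) (hC.le_one hu hv)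
  have hendpoints : -Real.log (C (y ^ (1 - t)) (y ^ t)) ≤ -Real.log y := by
    have := hconv.le_on_segment (z := t) ⟨le_rfl, zero_le_one⟩ ⟨zero_le_one, le_rfl⟩
      (by rwa [segment_eq_Icc zero_le_one])
    simpa [(hC.1 y hyI).2, (hC.2.1 y hyI).2] using this
  have hly : Real.log y < 0 := Real.log_neg hy.1 hy.2
  rw [abs_le, le_div_iff_of_neg hly, div_le_iff_of_neg hly]
  constructor <;> linarith

lemma integrableOn_log_div_log_mul (hC : IsCopula C)
    (hconv : ∀ y ∈ Ioo (0:ℝ) 1,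
      ConvexOn ℝ (Icc (0:ℝ) 1) fun t => -Real.log (C (y ^ (1 - t)) (y ^ t)))
    {w : ℝ → ℝ} (hw : IntegrableOn w (Ioo 0 1)) {t : ℝ} (ht : t ∈ Icc (0:ℝ) 1) :
    IntegrableOn (fun y => Real.log (C (y ^ (1 - t)) (y ^ t)) / Real.log y * w y) (Ioo 0 1) := by
  have hmono := (hC.monotoneOn_rpow ht).mono Ioo_subset_Icc_self
  have hmeas := aemeasurable_restrict_of_monotoneOn (μ := volume) measurableSet_Ioo hmono
  refine hw.bdd_mul (c := 1)
    ((Real.measurable_log.comp_aemeasurable hmeas).div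
      Real.measurable_log.aemeasurable).aestronglyMeasurable ?_
  filter_upwards [ae_restrict_mem measurableSet_Ioo] with y hy
  rw [Real.norm_eq_abs]
  exact hC.abs_log_div_log_le_one hy (hconv y hy) ht

end IsCopula

lemma convexOn_log_div_log_mul {C : ℝ → ℝ → ℝ} {s : Set ℝ} {y w : ℝ} (hy : y ∈ Ioo (0:ℝ) 1)
    (hconv : ConvexOn ℝ s fun t => -Real.log (C (y ^ (1 - t)) (y ^ t))) (hw : 0 ≤ w) :
    ConvexOn ℝ s fun t => Real.log (C (y ^ (1 - t)) (y ^ t)) / Real.log y * w := by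
  have hly : 0 ≤ -Real.log y := neg_nonneg.2 (Real.log_neg hy.1 hy.2).le
  refine (hconv.smul (mul_nonneg (inv_nonneg.2 hly) hw)).congr fun t _ => ?_
  simp only [smul_eq_mul]
  ring

theorem stmt9_general (C : ℝ → ℝ → ℝ) (hC : IsCopula C)
    (hconv : ∀ y ∈ Set.Ioo (0:ℝ) 1,
      ConvexOn ℝ (Set.Icc (0:ℝ) 1) (fun t => - Real.log (C (y ^ (1 - t)) (y ^ t))))
    (h : ℝ → ℝ) (hnn : ∀ y ∈ Set.Ioo (0:ℝ) 1, 0 ≤ h y)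
    (Bh : ℝ) (hBpos : 0 < Bh)
    (hBfin : IntervalIntegrable (fun y => (Real.log y) ^ 2 * h y) volume 0 1)
    (Astar : ℝ → ℝ)
    (hAstar : ∀ t, Astar t =
      Bh⁻¹ * ∫ y in (0:ℝ)..1,
        (Real.log (C (y ^ (1 - t)) (y ^ t)) / Real.log y) * ((Real.log y) ^ 2 * h y)) :
    ConvexOn ℝ (Set.Icc (0:ℝ) 1) Astar := by
  have hA : Astar = fun t => Bh⁻¹ • ∫ y in Ioo 0 1,
      Real.log (C (y ^ (1 - t)) (y ^ t)) / Real.log y * ((Real.log y) ^ 2 * h y) := by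
    ext t
    rw [hAstar, integral_of_le zero_le_one, integral_Ioc_eq_integral_Ioo, smul_eq_mul]
  have hw : IntegrableOn (fun y => (Real.log y) ^ 2 * h y) (Ioo 0 1) :=
    ((intervalIntegrable_iff_integrableOn_Ioc_of_le zero_le_one).1 hBfin).mono_set
      Ioo_subset_Ioc_self
  rw [hA]
  refine ConvexOn.smul (inv_nonneg.2 hBpos.le) (convexOn_integral (convex_Icc 0 1) ?_
    fun t ht => hC.integrableOn_log_div_log_mul hconv hw ht)
  filter_upwards [ae_restrict_mem measurableSet_Ioo] with y hy
  exact convexOn_log_div_log_mul hy (hconv y hy) (mul_nonneg (sq_nonneg _) (hnn y hy))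

theorem stmt9 (C : ℝ → ℝ → ℝ) (hC : IsCopula C)
    (hconv : ∀ y ∈ Set.Ioo (0:ℝ) 1,
      ConvexOn ℝ (Set.Icc (0:ℝ) 1) (fun t => - Real.log (C (y ^ (1 - t)) (y ^ t))))
    (h : ℝ → ℝ) (hnn : ∀ y ∈ Set.Ioo (0:ℝ) 1, 0 ≤ h y)
    (Bh : ℝ) (hBh : Bh = ∫ y in (0:ℝ)..1, (Real.log y) ^ 2 * h y) (hBpos : 0 < Bh)
    (hBfin : IntervalIntegrable (fun y => (Real.log y) ^ 2 * h y) volume 0 1)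
    (Astar : ℝ → ℝ)
    (hAstar : ∀ t, Astar t =
      Bh⁻¹ * ∫ y in (0:ℝ)..1,
        (Real.log (C (y ^ (1 - t)) (y ^ t)) / Real.log y) * ((Real.log y) ^ 2 * h y)) :
    ConvexOn ℝ (Set.Icc (0:ℝ) 1) Astar :=
  stmt9_general C hC hconv h hnn Bh hBpos hBfin Astar hAstar
end

section
/- For the Clayton copula C_θ(u,v) = (u^{-θ} + v^{-θ} − 1)^{-1/θ} with θ > 0, and f_y(t) = C_θ(y^{1-t}, y^t) for y ∈ (0,1), the inequality (f_y'(t))² − f_y''(t) f_y(t) = θ (log y)² (C_θ(y^{1-t},y^t))^{2+2θ} (4 y^{-θ} − y^{-θ t} − y^{-θ(1-t)}) ≥ 0 holds for all (y,t) ∈ (0,1)², and consequently t ↦ −log C_θ(y^{1-t},y^t) is convex for every y ∈ (0,1). -/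
open MeasureTheory Set

/-- The Clayton copula with parameter `θ > 0`. -/
noncomputable def clayton (θ : ℝ) (u v : ℝ) : ℝ :=
  (u ^ (-θ) + v ^ (-θ) - 1) ^ (-(1/θ))

/-!
Along the curve `s ↦ (y ^ (1 - s), y ^ s)` the Clayton copula is `f = g ^ (-1/θ)` with
`g s = a s + b s - 1`, `a s = y ^ (-θ (1 - s))`, `b s = y ^ (-θ s)`. For any positive `g`,
`f' ^ 2 - f'' f = θ⁻¹ f ^ (2 + 2θ) (g'' g - g' ^ 2)`, and here `g' = θ log y (a - b)`,
`g'' = (θ log y) ^ 2 (a + b)` and `a b = y ^ (-θ)`, so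
`g'' g - g' ^ 2 = (θ log y) ^ 2 (4 y ^ (-θ) - a - b)`.
This is nonnegative on `[0, 1]` because `a, b ≤ y ^ (-θ)` there. Finally
`(-log f)'' = (f' ^ 2 - f'' f) / f ^ 2`, which gives the convexity.
-/

open Real

theorem convexOn_neg_log_of_sq_deriv_sub_deriv2_mul_nonneg {f : ℝ → ℝ} {D : Set ℝ}
    (hD : Convex ℝ D) (hpos : ∀ x, 0 < f x) (hf : Differentiable ℝ f)
    (hf' : Differentiable ℝ (deriv f))
    (h : ∀ x ∈ interior D, 0 ≤ deriv f x ^ 2 - deriv (deriv f) x * f x) :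
    ConvexOn ℝ D (fun x => -log (f x)) := by
  refine convexOn_of_hasDerivWithinAt2_nonneg hD (f' := fun x => -(deriv f x / f x))
    (f'' := fun x => (deriv f x ^ 2 - deriv (deriv f) x * f x) / f x ^ 2)
    (hf.continuous.log fun x => (hpos x).ne').neg.continuousOn
    (fun x _ => ((hf x).hasDerivAt.log (hpos x).ne').neg.hasDerivWithinAt)
    (fun x _ => ?_) (fun x hx => div_nonneg (h x hx) (sq_nonneg _))
  exact (((hf' x).hasDerivAt.div (hf x).hasDerivAt (hpos x).ne').neg.congr_deriv
    (by ring)).hasDerivWithinAt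

section RpowDeriv

variable {g : ℝ → ℝ}

theorem deriv_rpow_const_of_pos (hpos : ∀ x, 0 < g x) (hg : Differentiable ℝ g) (p : ℝ) :
    deriv (fun x => g x ^ p) = fun x => deriv g x * p * g x ^ (p - 1) :=
  funext fun x => deriv_rpow_const (hg x) (Or.inl (hpos x).ne')

theorem differentiable_deriv_rpow_const (hpos : ∀ x, 0 < g x) (hg : Differentiable ℝ g)
    (hg' : Differentiable ℝ (deriv g)) (p : ℝ) :
    Differentiable ℝ (deriv fun x => g x ^ p) := by
  rw [deriv_rpow_const_of_pos hpos hg]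
  exact (hg'.mul_const p).mul (hg.rpow_const fun x => Or.inl (hpos x).ne')

theorem sq_deriv_rpow_sub_deriv2_mul {θ : ℝ} (hθ : θ ≠ 0) (hpos : ∀ x, 0 < g x)
    (hg : Differentiable ℝ g) (hg' : Differentiable ℝ (deriv g)) (x : ℝ) :
    deriv (fun x => g x ^ (-(1/θ))) x ^ 2 -
        deriv (deriv fun x => g x ^ (-(1/θ))) x * g x ^ (-(1/θ))
      = 1/θ * (g x ^ (-(1/θ))) ^ (2 + 2 * θ) * (deriv (deriv g) x * g x - deriv g x ^ 2) := by
  set p := -(1/θ) with hp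
  have hG := hpos x
  have hd2 : HasDerivAt (fun x => deriv g x * p * g x ^ (p - 1))
      (deriv (deriv g) x * p * g x ^ (p - 1) +
        deriv g x * p * (deriv g x * (p - 1) * g x ^ (p - 1 - 1))) x :=
    ((hg' x).hasDerivAt.mul_const p).mul ((hg x).hasDerivAt.rpow_const (Or.inl hG.ne'))
  rw [deriv_rpow_const_of_pos hpos hg, hd2.deriv]
  beta_reduce
  -- express every power of `g x` through `g x ^ (p - 2)`
  have e2 : (g x ^ p) ^ (2 + 2 * θ) = (g x ^ (p - 1 - 1)) ^ 2 * g x ^ 2 := by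
    rw [← rpow_mul hG.le, ← rpow_natCast, ← rpow_natCast, ← rpow_mul hG.le, ← rpow_add hG]
    congr 1; push_cast; rw [hp]; field_simp; ring
  have e1 : g x ^ (p - 1) = g x ^ (p - 1 - 1) * g x := by
    rw [← rpow_add_one hG.ne']; ring_nf
  have e0 : g x ^ p = g x ^ (p - 1 - 1) * g x ^ 2 := by
    rw [← rpow_natCast, ← rpow_add hG]; ring_nf
  rw [e2, e1, e0]
  generalize g x ^ (p - 1 - 1) = Q
  rw [hp]
  field_simp
  ring

end RpowDeriv

noncomputable def claytonBase (θ y s : ℝ) : ℝ :=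
  y ^ (-(θ * (1 - s))) + y ^ (-(θ * s)) - 1

theorem clayton_rpow_one_sub_rpow (θ : ℝ) {y : ℝ} (hy : 0 < y) (s : ℝ) :
    clayton θ (y ^ (1 - s)) (y ^ s) = claytonBase θ y s ^ (-(1/θ)) := by
  rw [clayton, claytonBase, ← rpow_mul hy.le, ← rpow_mul hy.le, mul_neg, mul_neg,
    mul_comm (1 - s), mul_comm s]

section ClaytonBase

variable {θ y : ℝ}

theorem claytonBase_pos (hθ : 0 < θ) (hy0 : 0 < y) (hy1 : y < 1) (s : ℝ) :
    0 < claytonBase θ y s := by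
  have h := rpow_pos_of_pos hy0
  unfold claytonBase
  rcases le_total s 1 with hs | hs
  · have : 1 ≤ y ^ (-(θ * (1 - s))) :=
      one_le_rpow_of_pos_of_le_one_of_nonpos hy0 hy1.le (by nlinarith)
    linarith [h (-(θ * s))]
  · have : 1 ≤ y ^ (-(θ * s)) :=
      one_le_rpow_of_pos_of_le_one_of_nonpos hy0 hy1.le (by nlinarith)
    linarith [h (-(θ * (1 - s)))]

theorem hasDerivAt_rpow_neg_mul_one_sub (hy : 0 < y) (s : ℝ) :
    HasDerivAt (fun s => y ^ (-(θ * (1 - s)))) (θ * log y * y ^ (-(θ * (1 - s)))) s := by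
  have h : HasDerivAt (fun s => -(θ * (1 - s))) θ s := by
    simpa using (((hasDerivAt_id s).const_sub 1).const_mul θ).fun_neg
  exact (h.const_rpow hy).congr_deriv (by ring)

theorem hasDerivAt_rpow_neg_mul (hy : 0 < y) (s : ℝ) :
    HasDerivAt (fun s => y ^ (-(θ * s))) (-(θ * log y * y ^ (-(θ * s)))) s := by
  have h : HasDerivAt (fun s => -(θ * s)) (-θ) s := by
    simpa using ((hasDerivAt_id s).const_mul θ).fun_neg
  exact (h.const_rpow hy).congr_deriv (by ring)

theorem hasDerivAt_claytonBase (hy : 0 < y) (s : ℝ) :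
    HasDerivAt (claytonBase θ y)
      (θ * log y * (y ^ (-(θ * (1 - s))) - y ^ (-(θ * s)))) s :=
  (((hasDerivAt_rpow_neg_mul_one_sub hy s).add (hasDerivAt_rpow_neg_mul hy s)).sub_const 1)
    |>.congr_deriv (by ring)

theorem deriv_claytonBase (hy : 0 < y) :
    deriv (claytonBase θ y) = fun s => θ * log y * (y ^ (-(θ * (1 - s))) - y ^ (-(θ * s))) :=
  funext fun s => (hasDerivAt_claytonBase hy s).deriv

theorem hasDerivAt_deriv_claytonBase (hy : 0 < y) (s : ℝ) :
    HasDerivAt (deriv (claytonBase θ y))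
      ((θ * log y) ^ 2 * (y ^ (-(θ * (1 - s))) + y ^ (-(θ * s)))) s := by
  rw [deriv_claytonBase hy]
  exact (((hasDerivAt_rpow_neg_mul_one_sub hy s).sub (hasDerivAt_rpow_neg_mul hy s)).const_mul
    (θ * log y)).congr_deriv (by ring)

theorem differentiable_claytonBase (hy : 0 < y) : Differentiable ℝ (claytonBase θ y) :=
  fun s => (hasDerivAt_claytonBase hy s).differentiableAt

theorem differentiable_deriv_claytonBase (hy : 0 < y) :
    Differentiable ℝ (deriv (claytonBase θ y)) :=
  fun s => (hasDerivAt_deriv_claytonBase hy s).differentiableAt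

theorem deriv2_claytonBase_mul_sub_sq (hy : 0 < y) (s : ℝ) :
    deriv (deriv (claytonBase θ y)) s * claytonBase θ y s - deriv (claytonBase θ y) s ^ 2
      = (θ * log y) ^ 2 * (4 * y ^ (-θ) - y ^ (-(θ * s)) - y ^ (-(θ * (1 - s)))) := by
  have hprod : y ^ (-(θ * (1 - s))) * y ^ (-(θ * s)) = y ^ (-θ) := by
    rw [← rpow_add hy]; ring_nf
  rw [(hasDerivAt_deriv_claytonBase hy s).deriv, deriv_claytonBase hy, claytonBase, ← hprod]
  ring

theorem four_rpow_neg_sub_rpow_sub_rpow_nonneg (hθ : 0 ≤ θ) (hy0 : 0 < y) (hy1 : y ≤ 1)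
    {s : ℝ} (hs : s ∈ Icc 0 1) :
    0 ≤ 4 * y ^ (-θ) - y ^ (-(θ * s)) - y ^ (-(θ * (1 - s))) := by
  have h1 : y ^ (-(θ * s)) ≤ y ^ (-θ) :=
    rpow_le_rpow_of_exponent_ge hy0 hy1 (by nlinarith [hs.2])
  have h2 : y ^ (-(θ * (1 - s))) ≤ y ^ (-θ) :=
    rpow_le_rpow_of_exponent_ge hy0 hy1 (by nlinarith [hs.1])
  linarith [rpow_nonneg hy0.le (-θ)]

end ClaytonBase

section ClaytonPath

variable {θ y : ℝ}

theorem clayton_path_sq_deriv_sub_deriv2_mul (hθ : 0 < θ) (hy0 : 0 < y) (hy1 : y < 1) (t : ℝ) :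
    (deriv (fun s => clayton θ (y ^ (1 - s)) (y ^ s)) t) ^ 2 -
        deriv (deriv (fun s => clayton θ (y ^ (1 - s)) (y ^ s))) t *
          clayton θ (y ^ (1 - t)) (y ^ t)
      = θ * log y ^ 2 * clayton θ (y ^ (1 - t)) (y ^ t) ^ (2 + 2 * θ) *
          (4 * y ^ (-θ) - y ^ (-(θ * t)) - y ^ (-(θ * (1 - t)))) := by
  simp only [clayton_rpow_one_sub_rpow θ hy0]
  rw [sq_deriv_rpow_sub_deriv2_mul hθ.ne' (claytonBase_pos hθ hy0 hy1)
    (differentiable_claytonBase hy0) (differentiable_deriv_claytonBase hy0),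
    deriv2_claytonBase_mul_sub_sq hy0]
  field_simp

theorem clayton_path_sq_deriv_sub_deriv2_mul_nonneg (hθ : 0 < θ) (hy0 : 0 < y) (hy1 : y < 1)
    {t : ℝ} (ht : t ∈ Icc 0 1) :
    0 ≤ θ * log y ^ 2 * clayton θ (y ^ (1 - t)) (y ^ t) ^ (2 + 2 * θ) *
        (4 * y ^ (-θ) - y ^ (-(θ * t)) - y ^ (-(θ * (1 - t)))) := by
  rw [clayton_rpow_one_sub_rpow θ hy0]
  have := rpow_pos_of_pos (claytonBase_pos hθ hy0 hy1 t) (-(1/θ))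
  exact mul_nonneg (by positivity) (four_rpow_neg_sub_rpow_sub_rpow_nonneg hθ.le hy0 hy1.le ht)

theorem convexOn_neg_log_clayton_path (hθ : 0 < θ) (hy0 : 0 < y) (hy1 : y < 1) :
    ConvexOn ℝ (Icc (0 : ℝ) 1) fun t => -log (clayton θ (y ^ (1 - t)) (y ^ t)) := by
  have hpos := claytonBase_pos hθ hy0 hy1
  have hg := differentiable_claytonBase (θ := θ) hy0
  have hF : (fun s => clayton θ (y ^ (1 - s)) (y ^ s)) = fun s => claytonBase θ y s ^ (-(1/θ)) :=
    funext (clayton_rpow_one_sub_rpow θ hy0)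
  refine convexOn_neg_log_of_sq_deriv_sub_deriv2_mul_nonneg (convex_Icc 0 1) ?_ ?_ ?_ ?_
  · exact fun t => (clayton_rpow_one_sub_rpow θ hy0 t).symm ▸ rpow_pos_of_pos (hpos t) _
  · exact hF ▸ hg.rpow_const fun t => Or.inl (hpos t).ne'
  · exact hF ▸ differentiable_deriv_rpow_const hpos hg (differentiable_deriv_claytonBase hy0) _
  · rw [interior_Icc]
    intro t ht
    rw [clayton_path_sq_deriv_sub_deriv2_mul hθ hy0 hy1]
    exact clayton_path_sq_deriv_sub_deriv2_mul_nonneg hθ hy0 hy1 (Ioo_subset_Icc_self ht)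

end ClaytonPath

theorem stmt10 (θ : ℝ) (hθ : 0 < θ) :
    ∀ y ∈ Set.Ioo (0:ℝ) 1, ∀ t ∈ Set.Ioo (0:ℝ) 1,
      ((deriv (fun s => clayton θ (y ^ (1 - s)) (y ^ s)) t) ^ 2 -
        deriv (deriv (fun s => clayton θ (y ^ (1 - s)) (y ^ s))) t *
          clayton θ (y ^ (1 - t)) (y ^ t)
        = θ * (Real.log y) ^ 2 * (clayton θ (y ^ (1 - t)) (y ^ t)) ^ (2 + 2 * θ) *
            (4 * y ^ (-θ) - y ^ (-(θ * t)) - y ^ (-(θ * (1 - t)))) ∧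
       0 ≤ θ * (Real.log y) ^ 2 * (clayton θ (y ^ (1 - t)) (y ^ t)) ^ (2 + 2 * θ) *
            (4 * y ^ (-θ) - y ^ (-(θ * t)) - y ^ (-(θ * (1 - t))))) ∧
    ∀ y ∈ Set.Ioo (0:ℝ) 1,
      ConvexOn ℝ (Set.Icc (0:ℝ) 1)
        (fun t => - Real.log (clayton θ (y ^ (1 - t)) (y ^ t))) := by
  rintro y ⟨hy0, hy1⟩ t ht
  exact ⟨⟨clayton_path_sq_deriv_sub_deriv2_mul hθ hy0 hy1 t,
    clayton_path_sq_deriv_sub_deriv2_mul_nonneg hθ hy0 hy1 (Ioo_subset_Icc_self ht)⟩,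
    fun z hz => convexOn_neg_log_clayton_path hθ hz.1 hz.2⟩
end

section
/- For a ∈ ℝ with a + μ > 0, μ ≥ 0, and ν ∈ [0,1): ∫₀¹ (y^a − 𝟙{y > e^{-1}}) y^{μ-1} (−log y)^{-ν} dy = Γ(1−ν)/(a+μ)^{1−ν} − ∫₀¹ e^{-μx} x^{-ν} dx. -/
/-!
Substituting `y = exp (-x)` turns the integrand into
`exp (-((a + μ) x)) x ^ (-ν) - 𝟙{x < 1} exp (-(μ x)) x ^ (-ν)` on `(0, ∞)`. Since `ν < 1`, both
pieces are integrable, so the integral splits: the first piece is the Gamma integral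
`Γ(1 - ν) / (a + μ) ^ (1 - ν)`, and the second is the integral of `exp (-(μ x)) x ^ (-ν)` over
`(0, 1)`.
-/

open MeasureTheory intervalIntegral

open Real Set

theorem image_exp_neg_Ioi (a : ℝ) : (fun x => exp (-x)) '' Ioi a = Ioo 0 (exp (-a)) := by
  rw [← image_exp_Iio, ← image_neg_Ioi, image_image]

theorem integral_comp_exp_neg_Ioi {E : Type*} [NormedAddCommGroup E] [NormedSpace ℝ E]
    (g : ℝ → E) (a : ℝ) :
    ∫ x in Ioi a, exp (-x) • g (exp (-x)) = ∫ y in Ioo 0 (exp (-a)), g y := by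
  symm
  rw [← image_exp_neg_Ioi]
  simpa [abs_of_pos (exp_pos _)] using integral_image_eq_integral_abs_deriv_smul
    (measurableSet_Ioi (a := a)) (fun x _ => (hasDerivAt_neg x).exp.hasDerivWithinAt)
    (fun x _ y _ hxy => neg_injective (exp_injective hxy)) g

theorem integral_exp_neg_mul_mul_rpow_neg_Ioi {b ν : ℝ} (hb : 0 < b) (hν : ν < 1) :
    ∫ x in Ioi 0, exp (-(b * x)) * x ^ (-ν) = Gamma (1 - ν) / b ^ (1 - ν) := by
  have h := integral_rpow_mul_exp_neg_mul_Ioi (sub_pos.2 hν) hb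
  rw [sub_sub_cancel_left, one_div, inv_rpow hb.le] at h
  simp_rw [mul_comm (exp _)]
  rw [h, div_eq_inv_mul]

theorem integrableOn_exp_neg_mul_mul_rpow_neg_Ioi {b ν : ℝ} (hb : 0 < b) (hν : ν < 1) :
    IntegrableOn (fun x => exp (-(b * x)) * x ^ (-ν)) (Ioi 0) := by
  simpa [mul_comm] using
    integrableOn_rpow_mul_exp_neg_mul_rpow (p := 1) (by linarith) one_pos hb

theorem integrableOn_exp_neg_mul_mul_rpow_neg_Ioo (b : ℝ) {ν : ℝ} (hν : ν < 1) :
    IntegrableOn (fun x => exp (-(b * x)) * x ^ (-ν)) (Ioo 0 1) :=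
  IntegrableOn.continuousOn_mul_of_subset (by fun_prop)
    ((intervalIntegrable_rpow' (by linarith)).1.mono_set Ioo_subset_Ioc_self)
    isCompact_Icc measurableSet_Ioo Ioo_subset_Icc_self

theorem exp_neg_mul_integrand_comp_exp_neg (a μ ν x : ℝ) :
    exp (-x) * ((exp (-x) ^ a - (if exp (-x) > exp (-1) then (1:ℝ) else 0)) *
        exp (-x) ^ (μ - 1) * (-log (exp (-x))) ^ (-ν))
      = exp (-((a + μ) * x)) * x ^ (-ν)
        - (Iio 1).indicator (fun x => exp (-(μ * x)) * x ^ (-ν)) x := by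
  have hμ : exp (-x) * exp (-x) ^ (μ - 1) = exp (-(μ * x)) := by
    rw [← exp_mul, ← exp_add]; ring_nf
  have haμ : exp (-x) ^ a * exp (-(μ * x)) = exp (-((a + μ) * x)) := by
    rw [← exp_mul, ← exp_add]; ring_nf
  have hif : (if exp (-x) > exp (-1) then (1:ℝ) else 0) = (Iio 1).indicator 1 x := by
    simp [indicator_apply, exp_lt_exp]
  rw [log_exp, neg_neg, hif]
  by_cases hx : x ∈ Iio 1
  · simp only [indicator_of_mem hx, Pi.one_apply]
    linear_combination x ^ (-ν) * ((exp (-x) ^ a - 1) * hμ + haμ)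
  · simp only [indicator_of_notMem hx, sub_zero]
    linear_combination x ^ (-ν) * (exp (-x) ^ a * hμ + haμ)

theorem stmt13_general (a μ ν : ℝ) (hsum : 0 < a + μ)
    (hν : ν ∈ Set.Ico (0:ℝ) 1) :
    ∫ y in (0:ℝ)..1,
        (y ^ a - (if y > Real.exp (-1) then (1:ℝ) else 0)) * y ^ (μ - 1) *
          (-Real.log y) ^ (-ν)
      = Real.Gamma (1 - ν) / (a + μ) ^ (1 - ν)
        - ∫ x in (0:ℝ)..1, Real.exp (-(μ * x)) * x ^ (-ν) := by
  have hIoo (f : ℝ → ℝ) : ∫ x in (0:ℝ)..1, f x = ∫ x in Ioo 0 (exp (-0)), f x := by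
    rw [neg_zero, exp_zero, integral_of_le zero_le_one, integral_Ioc_eq_integral_Ioo]
  rw [hIoo, hIoo, ← integral_comp_exp_neg_Ioi]
  simp_rw [smul_eq_mul, exp_neg_mul_integrand_comp_exp_neg]
  rw [integral_sub (integrableOn_exp_neg_mul_mul_rpow_neg_Ioi hsum hν.2)
      ((integrableOn_indicator_iff measurableSet_Iio).2 (by
        rw [Iio_inter_Ioi]; exact integrableOn_exp_neg_mul_mul_rpow_neg_Ioo μ hν.2)),
    integral_exp_neg_mul_mul_rpow_neg_Ioi hsum hν.2, setIntegral_indicator measurableSet_Iio,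
    Ioi_inter_Iio, neg_zero, exp_zero]

theorem stmt13 (a μ ν : ℝ) (hsum : 0 < a + μ) (hμ : 0 ≤ μ)
    (hν : ν ∈ Set.Ico (0:ℝ) 1) :
    ∫ y in (0:ℝ)..1,
        (y ^ a - (if y > Real.exp (-1) then (1:ℝ) else 0)) * y ^ (μ - 1) *
          (-Real.log y) ^ (-ν)
      = Real.Gamma (1 - ν) / (a + μ) ^ (1 - ν)
        - ∫ x in (0:ℝ)..1, Real.exp (-(μ * x)) * x ^ (-ν) :=
  stmt13_general a μ ν hsum hν
end

section
/- Let (𝔻,d) be a metric space, and let X_n, X_{i,n}: Ω → 𝔻 (i,n ∈ ℕ) be arbitrary maps and X_i, X: Ω → 𝔻 Borel-measurable maps. Suppose: (i) for every i, X_{i,n} converges weakly (in the Hoffmann–Jørgensen sense, using outer expectations) to X_i as n → ∞; (ii) X_i converges weakly to X as i → ∞; (iii) for every ε > 0, lim_{i→∞} limsup_{n→∞} ℙ*(d(X_{i,n}, X_n) > ε) = 0, where ℙ* denotes outer probability. Then X_n converges weakly to X as n → ∞. -/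
open MeasureTheory Filter Topology

variable {Ω : Type*} [MeasurableSpace Ω] {D : Type*} [MetricSpace D] [MeasurableSpace D] [BorelSpace D]

/-- Outer expectation `E*[f]` of a (possibly nonmeasurable) real function `f`
with respect to a measure `P`: the infimum of integrals of measurable
integrable functions dominating `f`. -/
noncomputable def outerExp (P : MeasureTheory.Measure Ω) (f : Ω → ℝ) : ℝ :=
  sInf {r : ℝ | ∃ g : Ω → ℝ, Measurable g ∧ (∀ ω, f ω ≤ g ω) ∧
    MeasureTheory.Integrable g P ∧ (∫ ω, g ω ∂P) = r}

/-- Weak convergence in the Hoffmann–Jørgensen sense, along a filter `l`: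
outer expectations of bounded continuous functionals converge. -/
def WeakConvHJ {ι : Type*} (l : Filter ι) (P : MeasureTheory.Measure Ω)
    (X : ι → Ω → D) (Y : Ω → D) : Prop :=
  ∀ f : D → ℝ, Continuous f → (∃ M : ℝ, ∀ x, |f x| ≤ M) →
    Tendsto (fun n => outerExp P (fun ω => f (X n ω))) l
      (nhds (∫ ω, f (Y ω) ∂P))

/-! By the Portmanteau theorem for outer expectations it suffices to show
`limsup ℙ*(X_n ∈ F) ≤ ℙ(X ∈ F)` for closed `F`. If `X_n ∈ F` then either `d(X_{i,n}, X_n) > ε`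
or `X_{i,n} ∈ F^ε`, so the weak convergences `X_{i,n} ⇝ X_i ⇝ X`, applied to the closed set `F^ε`,
bound that limsup by `limsup_n ℙ*(d(X_{i,n}, X_n) > ε) + ℙ(X ∈ F^ε)`. Letting `i → ∞` and then
`ε → 0` gives the claim, since `F^ε ↓ F`.

The Portmanteau direction needed here is the converse one, for nonmeasurable `X_n`: a continuous
`g` with values in `[0, 1]` is dominated within `1/k` by the staircase `k⁻¹ ∑_{j ≤ k} 1{g ≥ j/k}`,
whose outer expectation is controlled by the outer probabilities of the closed sets `{g ≥ j/k}`. -/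

theorem ENNReal.limsup_add_le' {α : Type*} {f : Filter α} (u v : α → ENNReal) :
    limsup (u + v) f ≤ limsup u f + limsup v f := by
  refine ENNReal.le_of_forall_pos_le_add fun ε hε hfin => ?_
  have hhalf : (ε / 2 : ENNReal) ≠ 0 := by simpa using hε.ne'
  have hu := eventually_lt_of_limsup_lt
    (ENNReal.lt_add_right (ne_top_of_le_ne_top hfin.ne le_self_add) hhalf)
  have hv := eventually_lt_of_limsup_lt
    (ENNReal.lt_add_right (ne_top_of_le_ne_top hfin.ne le_add_self) hhalf)
  refine limsup_le_of_le (by isBoundedDefault) ?_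
  filter_upwards [hu, hv] with x hux hvx
  calc (u + v) x ≤ (limsup u f + ε / 2) + (limsup v f + ε / 2) := add_le_add hux.le hvx.le
    _ = limsup u f + limsup v f + ε := by rw [add_add_add_comm, ENNReal.add_halves]

section OuterExpectation

variable {P : Measure Ω} [IsProbabilityMeasure P] {f : Ω → ℝ}

lemma outerExp_le_integral {c : ℝ} (hf : ∀ ω, c ≤ f ω) {g : Ω → ℝ} (hg : Measurable g)
    (hfg : ∀ ω, f ω ≤ g ω) (hgi : Integrable g P) : outerExp P f ≤ ∫ ω, g ω ∂P := by
  refine csInf_le ⟨c, ?_⟩ ⟨g, hg, hfg, hgi, rfl⟩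
  rintro _ ⟨g', -, hfg', hgi', rfl⟩
  simpa using integral_mono (integrable_const c) hgi' fun ω => (hf ω).trans (hfg' ω)

lemma le_outerExp {M r : ℝ} (hf : ∀ ω, f ω ≤ M)
    (h : ∀ g : Ω → ℝ, Measurable g → (∀ ω, f ω ≤ g ω) → Integrable g P → r ≤ ∫ ω, g ω ∂P) :
    r ≤ outerExp P f := by
  refine le_csInf ⟨M, fun _ => M, measurable_const, hf, integrable_const M, by simp⟩ ?_
  rintro _ ⟨g, hg, hfg, hgi, rfl⟩
  exact h g hg hfg hgi

lemma outerExp_mul_add_le {a b M : ℝ} (ha : 0 < a) (hf : ∀ ω, |f ω| ≤ M) :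
    outerExp P (fun ω => a * f ω + b) ≤ a * outerExp P f + b := by
  suffices (outerExp P (fun ω => a * f ω + b) - b) / a ≤ outerExp P f by
    rw [div_le_iff₀ ha] at this
    linarith
  refine le_outerExp (fun ω => (abs_le.1 (hf ω)).2) fun g hg hfg hgi => ?_
  have hlower : ∀ ω, -(a * M) + b ≤ a * f ω + b := fun ω => by
    have := mul_le_mul_of_nonneg_left (abs_le.1 (hf ω)).1 ha.le
    linarith
  have := outerExp_le_integral (g := fun ω => a * g ω + b) hlower (by fun_prop)
    (fun ω => by gcongr; exact hfg ω) ((hgi.const_mul a).add (integrable_const b))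
  rw [integral_add (hgi.const_mul a) (integrable_const b), integral_const_mul] at this
  rw [div_le_iff₀ ha]
  simp only [integral_const, probReal_univ, smul_eq_mul, one_mul] at this
  linarith

lemma neg_outerExp_neg_le {M : ℝ} (hf : ∀ ω, |f ω| ≤ M) :
    -outerExp P (fun ω => -f ω) ≤ outerExp P f := by
  refine le_outerExp (fun ω => (abs_le.1 (hf ω)).2) fun g _ hfg hgi => ?_
  rw [neg_le]
  refine le_outerExp (fun ω => neg_le.1 (abs_le.1 (hf ω)).1) fun h _ hfh hhi => ?_
  have : 0 ≤ ∫ ω, g ω + h ω ∂P := integral_nonneg fun ω =>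
    show 0 ≤ g ω + h ω by linarith [hfg ω, hfh ω]
  rw [integral_add hgi hhi] at this
  linarith

lemma measure_le_ofReal_outerExp {A : Set Ω} (hf0 : ∀ ω, 0 ≤ f ω) (hf1 : ∀ ω, f ω ≤ 1)
    (hA : ∀ ω ∈ A, f ω = 1) : P A ≤ ENNReal.ofReal (outerExp P f) := by
  rw [← ofReal_measureReal]
  refine ENNReal.ofReal_le_ofReal (le_outerExp hf1 fun g hg hfg hgi => ?_)
  have hAg : A ⊆ {ω | 1 ≤ g ω} := fun ω hω => (hA ω hω).symm.trans_le (hfg ω)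
  calc P.real A ≤ P.real {ω | 1 ≤ g ω} := measureReal_mono hAg
    _ ≤ ∫ ω, g ω ∂P := by
      simpa using mul_meas_ge_le_integral_of_nonneg
        (ae_of_all _ fun ω => (hf0 ω).trans (hfg ω)) hgi 1

end OuterExpectation

section Staircase

noncomputable def staircase (k : ℕ) (t : ℝ) : ℝ :=
  (k : ℝ)⁻¹ * ∑ j ∈ Finset.Icc 1 k, if (j : ℝ) / k ≤ t then 1 else 0

variable {k : ℕ} {t : ℝ}

lemma staircase_eq (hk : 0 < k) (ht : 0 ≤ t) :
    staircase k t = (k : ℝ)⁻¹ * (min k ⌊(k : ℝ) * t⌋₊ : ℕ) := by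
  have hk' : (0 : ℝ) < k := Nat.cast_pos.2 hk
  have : {j ∈ Finset.Icc 1 k | ((j : ℕ) : ℝ) / k ≤ t} = Finset.Icc 1 (min k ⌊(k : ℝ) * t⌋₊) := by
    ext j
    simp only [Finset.mem_filter, Finset.mem_Icc, le_min_iff, div_le_iff₀ hk',
      Nat.le_floor_iff (mul_nonneg hk'.le ht), mul_comm t]
    tauto
  simp [staircase, Finset.sum_boole, this]

lemma staircase_le (hk : 0 < k) (ht : 0 ≤ t) : staircase k t ≤ t := by
  have hk' : (0 : ℝ) < k := Nat.cast_pos.2 hk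
  rw [staircase_eq hk ht, inv_mul_le_iff₀ hk']
  calc ((min k ⌊k * t⌋₊ : ℕ) : ℝ) ≤ ⌊k * t⌋₊ := Nat.cast_le.2 (min_le_right _ _)
    _ ≤ k * t := Nat.floor_le (mul_nonneg hk'.le ht)

lemma le_inv_add_staircase (hk : 0 < k) (ht0 : 0 ≤ t) (ht1 : t ≤ 1) :
    t ≤ (k : ℝ)⁻¹ + staircase k t := by
  have hk' : (0 : ℝ) < k := Nat.cast_pos.2 hk
  have hfloor : ⌊k * t⌋₊ ≤ k := Nat.floor_le_of_le (by nlinarith)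
  rw [staircase_eq hk ht0, min_eq_right hfloor, ← mul_one_add, mul_comm, ← div_eq_mul_inv,
    le_div_iff₀ hk']
  linarith [Nat.lt_floor_add_one ((k : ℝ) * t)]

end Staircase

section Discretization

variable {P : Measure Ω} [IsProbabilityMeasure P] {φ : Ω → ℝ} {k : ℕ}

lemma integral_inv_mul_sum_indicator {B : ℕ → Set Ω} (hB : ∀ j, MeasurableSet (B j)) :
    ∫ ω, (k : ℝ)⁻¹ * ∑ j ∈ Finset.Icc 1 k, (B j).indicator 1 ω ∂P =
      (k : ℝ)⁻¹ * ∑ j ∈ Finset.Icc 1 k, P.real (B j) := by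
  rw [integral_const_mul, integral_finsetSum _ fun j _ => (integrable_const 1).indicator (hB j)]
  simp only [integral_indicator_one (hB _)]

lemma outerExp_le_inv_add_inv_mul_sum_measureReal (hk : 0 < k) (hφ0 : ∀ ω, 0 ≤ φ ω)
    (hφ1 : ∀ ω, φ ω ≤ 1) :
    outerExp P φ ≤
      (k : ℝ)⁻¹ + (k : ℝ)⁻¹ * ∑ j ∈ Finset.Icc 1 k, P.real {ω | (j : ℝ) / k ≤ φ ω} := by
  -- dominate `φ` by the staircase built on measurable hulls of its superlevel sets
  set B : ℕ → Set Ω := fun j => toMeasurable P {ω | (j : ℝ) / k ≤ φ ω}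
  have hB : ∀ j, MeasurableSet (B j) := fun j => measurableSet_toMeasurable _ _
  have hdom : ∀ ω, φ ω ≤ (k : ℝ)⁻¹ + (k : ℝ)⁻¹ * ∑ j ∈ Finset.Icc 1 k, (B j).indicator 1 ω := by
    intro ω
    refine (le_inv_add_staircase hk (hφ0 ω) (hφ1 ω)).trans ?_
    unfold staircase
    gcongr with j
    split_ifs with h
    · rw [Set.indicator_of_mem (subset_toMeasurable P {ω | (j : ℝ) / k ≤ φ ω} h), Pi.one_apply]
    · exact Set.indicator_nonneg (fun _ _ => zero_le_one) ω
  have hint : Integrable (fun ω => (k : ℝ)⁻¹ * ∑ j ∈ Finset.Icc 1 k, (B j).indicator 1 ω) P :=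
    (integrable_finsetSum _ fun j _ => (integrable_const 1).indicator (hB j)).const_mul _
  calc outerExp P φ
      ≤ ∫ ω, (k : ℝ)⁻¹ + (k : ℝ)⁻¹ * ∑ j ∈ Finset.Icc 1 k, (B j).indicator 1 ω ∂P :=
        outerExp_le_integral hφ0
          (measurable_const.add (measurable_const.mul (Finset.measurable_sum _ fun j _ =>
            measurable_const.indicator (hB j)))) hdom ((integrable_const _).add hint)
    _ = _ := by
      rw [integral_add (integrable_const _) hint, integral_inv_mul_sum_indicator hB]
      simp [B, measureReal_def, measure_toMeasurable]

lemma inv_mul_sum_measureReal_le_integral (hk : 0 < k) (hφ : Measurable φ) (hφi : Integrable φ P)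
    (hφ0 : ∀ ω, 0 ≤ φ ω) :
    (k : ℝ)⁻¹ * ∑ j ∈ Finset.Icc 1 k, P.real {ω | (j : ℝ) / k ≤ φ ω} ≤ ∫ ω, φ ω ∂P := by
  have hS : ∀ j : ℕ, MeasurableSet {ω | (j : ℝ) / k ≤ φ ω} :=
    fun j => measurableSet_le measurable_const hφ
  rw [← integral_inv_mul_sum_indicator hS]
  refine integral_mono
    ((integrable_finsetSum _ fun j _ => (integrable_const 1).indicator (hS j)).const_mul _) hφi
    fun ω => (le_of_eq ?_).trans (staircase_le hk (hφ0 ω))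
  simp [staircase, Set.indicator_apply]

end Discretization

lemma integrable_comp_of_abs_le {P : Measure Ω} [IsFiniteMeasure P] {Y : Ω → D} {g : D → ℝ}
    (hg : Continuous g) {M : ℝ} (hM : ∀ x, |g x| ≤ M) (hY : Measurable Y) :
    Integrable (fun ω => g (Y ω)) P :=
  .of_bound (hg.measurable.comp hY).aestronglyMeasurable M (ae_of_all _ fun ω => hM (Y ω))

lemma eventually_measureReal_le_add {P : Measure Ω} [IsFiniteMeasure P] {ι : Type*}
    {l : Filter ι} {A : ι → Set Ω} {B : Set Ω}
    (h : limsup (fun n => P (A n)) l ≤ P B) {ε : ℝ} (hε : 0 < ε) :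
    ∀ᶠ n in l, P.real (A n) ≤ P.real B + ε := by
  have hlt : limsup (fun n => P (A n)) l < P B + ENNReal.ofReal ε :=
    h.trans_lt (ENNReal.lt_add_right (measure_ne_top P B) (ENNReal.ofReal_pos.2 hε).ne')
  filter_upwards [eventually_lt_of_limsup_lt hlt] with n hn
  rw [← ENNReal.toReal_ofReal hε.le, measureReal_def, measureReal_def,
    ← ENNReal.toReal_add (measure_ne_top P B) ENNReal.ofReal_ne_top]
  exact ENNReal.toReal_mono (by finiteness) hn.le

section Portmanteau

variable {P : Measure Ω} [IsProbabilityMeasure P] {ι : Type*} {l : Filter ι}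
  {X : ι → Ω → D} {Y : Ω → D} (hY : Measurable Y)
  (hcl : ∀ F : Set D, IsClosed F → limsup (fun n => P (X n ⁻¹' F)) l ≤ P (Y ⁻¹' F))
include hY hcl

lemma eventually_outerExp_le_integral_add_of_nonneg_of_le_one {g : D → ℝ} (hg : Continuous g)
    (hg0 : ∀ x, 0 ≤ g x) (hg1 : ∀ x, g x ≤ 1) {δ : ℝ} (hδ : 0 < δ) :
    ∀ᶠ n in l, outerExp P (fun ω => g (X n ω)) ≤ ∫ ω, g (Y ω) ∂P + δ := by
  obtain ⟨k, hk, hkδ⟩ : ∃ k : ℕ, 0 < k ∧ (k : ℝ)⁻¹ < δ / 2 := by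
    obtain ⟨k, hk⟩ := exists_nat_one_div_lt (half_pos hδ)
    exact ⟨k + 1, k.succ_pos, by simpa using hk⟩
  have hlevel : ∀ᶠ n in l, ∀ j ∈ Finset.Icc 1 k,
      P.real (X n ⁻¹' {x | (j : ℝ) / k ≤ g x}) ≤ P.real (Y ⁻¹' {x | (j : ℝ) / k ≤ g x}) + δ / 2 :=
    (Finset.eventually_all _).2 fun j _ => eventually_measureReal_le_add
      (hcl _ (isClosed_le continuous_const hg)) (half_pos hδ)
  filter_upwards [hlevel] with n hn
  have hinner : (k : ℝ)⁻¹ * ∑ j ∈ Finset.Icc 1 k, P.real (Y ⁻¹' {x | (j : ℝ) / k ≤ g x}) ≤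
      ∫ ω, g (Y ω) ∂P := inv_mul_sum_measureReal_le_integral hk (hg.measurable.comp hY)
    (integrable_comp_of_abs_le (Y := Y) hg (fun x => abs_le.2 ⟨by linarith [hg0 x], hg1 x⟩) hY)
    (fun ω => hg0 (Y ω))
  calc outerExp P (fun ω => g (X n ω))
      ≤ (k : ℝ)⁻¹ + (k : ℝ)⁻¹ *
          ∑ j ∈ Finset.Icc 1 k, P.real (X n ⁻¹' {x | (j : ℝ) / k ≤ g x}) :=
        outerExp_le_inv_add_inv_mul_sum_measureReal hk (fun ω => hg0 _) (fun ω => hg1 _)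
    _ ≤ (k : ℝ)⁻¹ + (k : ℝ)⁻¹ *
          ∑ j ∈ Finset.Icc 1 k, (P.real (Y ⁻¹' {x | (j : ℝ) / k ≤ g x}) + δ / 2) := by
        gcongr with j hj
        exact hn j hj
    _ = (k : ℝ)⁻¹ + ((k : ℝ)⁻¹ *
          ∑ j ∈ Finset.Icc 1 k, P.real (Y ⁻¹' {x | (j : ℝ) / k ≤ g x}) + δ / 2) := by
        rw [Finset.sum_add_distrib, Finset.sum_const, Nat.card_Icc, nsmul_eq_mul]
        field_simp
        simp
    _ ≤ ∫ ω, g (Y ω) ∂P + δ := by linarith [hinner]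

lemma eventually_outerExp_le_integral_add {g : D → ℝ} (hg : Continuous g) {M : ℝ}
    (hM : ∀ x, |g x| ≤ M) {δ : ℝ} (hδ : 0 < δ) :
    ∀ᶠ n in l, outerExp P (fun ω => g (X n ω)) ≤ ∫ ω, g (Y ω) ∂P + δ := by
  obtain ⟨c, hc, hMc⟩ : ∃ c : ℝ, 0 < c ∧ M ≤ c := ⟨|M| + 1, by positivity, by
    linarith [le_abs_self M]⟩
  set g' : D → ℝ := fun x => (g x + c) / (2 * c)
  have hg_eq : ∀ x, g x = 2 * c * g' x + -c := fun x => by simp only [g']; field_simp; ring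
  have hg'0 : ∀ x, 0 ≤ g' x := fun x =>
    div_nonneg (by linarith [(abs_le.1 (hM x)).1]) (by positivity)
  have hg'1 : ∀ x, g' x ≤ 1 := fun x =>
    (div_le_one (by positivity)).2 (by linarith [(abs_le.1 (hM x)).2])
  have hg'M : ∀ x, |g' x| ≤ 1 := fun x => abs_le.2 ⟨by linarith [hg'0 x], hg'1 x⟩
  have hint : ∫ ω, g (Y ω) ∂P = 2 * c * ∫ ω, g' (Y ω) ∂P + -c := by
    simp_rw [hg_eq]
    rw [integral_add ((integrable_comp_of_abs_le (by fun_prop) hg'M hY).const_mul _)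
      (integrable_const _), integral_const_mul]
    simp
  filter_upwards [eventually_outerExp_le_integral_add_of_nonneg_of_le_one hY hcl
    (by fun_prop) hg'0 hg'1 (div_pos hδ (mul_pos two_pos hc))] with n hn
  calc outerExp P (fun ω => g (X n ω))
      = outerExp P (fun ω => 2 * c * g' (X n ω) + -c) := by simp_rw [← hg_eq]
    _ ≤ 2 * c * outerExp P (fun ω => g' (X n ω)) + -c :=
        outerExp_mul_add_le (by positivity) fun ω => hg'M (X n ω)
    _ ≤ 2 * c * (∫ ω, g' (Y ω) ∂P + δ / (2 * c)) + -c := by gcongr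
    _ = ∫ ω, g (Y ω) ∂P + δ := by rw [hint]; field_simp; ring

theorem weakConvHJ_of_forall_isClosed_limsup_le : WeakConvHJ l P X Y := by
  intro g hg ⟨M, hM⟩
  refine tendsto_order.2 ⟨fun a ha => ?_, fun b hb => ?_⟩
  · have hupper := eventually_outerExp_le_integral_add hY hcl (g := fun x => -g x) hg.neg
      (M := M) (by simpa only [abs_neg] using hM) (half_pos (sub_pos.2 ha))
    filter_upwards [hupper] with n hn
    rw [integral_neg] at hn
    linarith [neg_outerExp_neg_le (P := P) fun ω => hM (X n ω)]
  · filter_upwards [eventually_outerExp_le_integral_add hY hcl hg hM (half_pos (sub_pos.2 hb))]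
      with n hn
    linarith

end Portmanteau

section ClosedSets

variable {P : Measure Ω} [IsProbabilityMeasure P] {ι : Type*} {l : Filter ι} [l.NeBot]

lemma WeakConvHJ.limsup_measure_preimage_le_ofReal_integral {E : Type*} [MetricSpace E]
    {X : ι → Ω → E} {Y : Ω → E} (h : WeakConvHJ l P X Y) {f : E → ℝ} (hf : Continuous f)
    (hf0 : ∀ x, 0 ≤ f x) (hf1 : ∀ x, f x ≤ 1) {A : Set E} (hA : ∀ x ∈ A, f x = 1) :
    limsup (fun n => P (X n ⁻¹' A)) l ≤ ENNReal.ofReal (∫ ω, f (Y ω) ∂P) :=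
  calc limsup (fun n => P (X n ⁻¹' A)) l
      ≤ limsup (fun n => ENNReal.ofReal (outerExp P fun ω => f (X n ω))) l :=
        limsup_le_limsup (.of_forall fun n =>
          measure_le_ofReal_outerExp (fun _ => hf0 _) (fun _ => hf1 _) fun ω hω => hA _ hω)
    _ = ENNReal.ofReal (∫ ω, f (Y ω) ∂P) :=
        ((ENNReal.continuous_ofReal.tendsto _).comp
          (h f hf ⟨1, fun x => abs_le.2 ⟨by linarith [hf0 x], hf1 x⟩⟩)).limsup_eq

lemma WeakConvHJ.limsup_measure_preimage_le {X : ι → Ω → D} {Y : Ω → D}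
    (h : WeakConvHJ l P X Y) (hY : Measurable Y) {F : Set D} (hF : IsClosed F) :
    limsup (fun n => P (X n ⁻¹' F)) l ≤ P (Y ⁻¹' F) := by
  have hδ : ∀ m : ℕ, (0 : ℝ) < 1 / (m + 1) := fun m => Nat.one_div_pos_of_nat
  have hlim := tendsto_integral_thickenedIndicator_of_isClosed (P.map Y) hF hδ
    tendsto_one_div_add_atTop_nhds_zero_nat
  rw [map_measureReal_apply hY hF.measurableSet] at hlim
  replace hlim := hlim.congr fun m => integral_map hY.aemeasurable
    (NNReal.continuous_coe.comp (thickenedIndicator (hδ m) F).continuous).aestronglyMeasurable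
  rw [← ofReal_measureReal]
  refine ge_of_tendsto' ((ENNReal.continuous_ofReal.tendsto _).comp hlim) fun m =>
    h.limsup_measure_preimage_le_ofReal_integral (f := fun x => thickenedIndicator (hδ m) F x)
      (by fun_prop) (fun x => NNReal.coe_nonneg _)
      (fun x => NNReal.coe_le_one.2 (thickenedIndicator_le_one (hδ m) F x))
      (fun x hx => by simp only [thickenedIndicator_one (hδ m) F hx, NNReal.coe_one])

end ClosedSets

lemma measure_preimage_le_add_measure_preimage_cthickening {E : Type*} [PseudoMetricSpace E]
    (μ : Measure Ω) (Z Z' : Ω → E) (F : Set E) (ε : ℝ) :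
    μ (Z ⁻¹' F) ≤ μ {ω | ε < dist (Z' ω) (Z ω)} + μ (Z' ⁻¹' Metric.cthickening ε F) := by
  refine (measure_mono fun ω hω => ?_).trans (measure_union_le _ _)
  by_cases hd : ε < dist (Z' ω) (Z ω)
  · exact Or.inl hd
  · exact Or.inr (Metric.mem_cthickening_of_dist_le _ _ _ _ hω (not_lt.1 hd))

lemma le_measure_preimage_of_forall_cthickening (μ : Measure Ω) [IsFiniteMeasure μ] {Y : Ω → D}
    (hY : Measurable Y) {F : Set D} (hF : IsClosed F) {L : ENNReal}
    (h : ∀ ε > 0, L ≤ μ (Y ⁻¹' Metric.cthickening ε F)) : L ≤ μ (Y ⁻¹' F) := by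
  have hlim : Tendsto (fun ε => μ.map Y (Metric.cthickening ε F)) (𝓝[>] 0) (𝓝 (μ.map Y F)) :=
    (tendsto_measure_cthickening_of_isClosed ⟨1, one_pos, measure_ne_top _ _⟩ hF).mono_left
      nhdsWithin_le_nhds
  rw [Measure.map_apply hY hF.measurableSet] at hlim
  refine ge_of_tendsto hlim (eventually_nhdsWithin_of_forall fun ε (hε : 0 < ε) => ?_)
  rw [Measure.map_apply hY Metric.isClosed_cthickening.measurableSet]
  exact h ε hε

lemma limsup_measure_preimage_le_measure_preimage_cthickening {P : Measure Ω}
    [IsProbabilityMeasure P] {X : ℕ → Ω → D} {Xin : ℕ → ℕ → Ω → D} {Xi : ℕ → Ω → D}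
    {Xlim : Ω → D} (hXi : ∀ i, Measurable (Xi i)) (hXlim : Measurable Xlim)
    (h1 : ∀ i, WeakConvHJ atTop P (fun n => Xin i n) (Xi i)) (h2 : WeakConvHJ atTop P Xi Xlim)
    {ε : ℝ} (h3 : Tendsto (fun i =>
      limsup (fun n => P {ω | ε < dist (Xin i n ω) (X n ω)}) atTop) atTop (𝓝 0))
    (F : Set D) :
    limsup (fun n => P (X n ⁻¹' F)) atTop ≤ P (Xlim ⁻¹' Metric.cthickening ε F) := by
  set c := fun i => limsup (fun n => P {ω | ε < dist (Xin i n ω) (X n ω)}) atTop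
  set b := fun i => P (Xi i ⁻¹' Metric.cthickening ε F)
  have hsplit : ∀ i, limsup (fun n => P (X n ⁻¹' F)) atTop ≤ c i + b i := fun i =>
    calc limsup (fun n => P (X n ⁻¹' F)) atTop
        ≤ limsup ((fun n => P {ω | ε < dist (Xin i n ω) (X n ω)}) +
            fun n => P (Xin i n ⁻¹' Metric.cthickening ε F)) atTop :=
          limsup_le_limsup (.of_forall fun n =>
            measure_preimage_le_add_measure_preimage_cthickening P _ _ F ε)
      _ ≤ c i + limsup (fun n => P (Xin i n ⁻¹' Metric.cthickening ε F)) atTop :=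
          ENNReal.limsup_add_le' _ _
      _ ≤ c i + b i := by
          gcongr
          exact (h1 i).limsup_measure_preimage_le (hXi i) Metric.isClosed_cthickening
  calc limsup (fun n => P (X n ⁻¹' F)) atTop
      ≤ limsup (c + b) atTop := le_limsup_of_frequently_le (.of_forall hsplit)
    _ = limsup b atTop := ENNReal.limsup_add_of_left_tendsto_zero h3 b
    _ ≤ P (Xlim ⁻¹' Metric.cthickening ε F) :=
        h2.limsup_measure_preimage_le hXlim Metric.isClosed_cthickening

theorem stmt16 (P : MeasureTheory.Measure Ω) [MeasureTheory.IsProbabilityMeasure P]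
    (X : ℕ → Ω → D) (Xin : ℕ → ℕ → Ω → D) (Xi : ℕ → Ω → D) (Xlim : Ω → D)
    (hXi : ∀ i, Measurable (Xi i)) (hXlim : Measurable Xlim)
    (h1 : ∀ i : ℕ, WeakConvHJ atTop P (fun n => Xin i n) (Xi i))
    (h2 : WeakConvHJ atTop P Xi Xlim)
    (h3 : ∀ ε : ℝ, 0 < ε →
      Tendsto (fun i : ℕ =>
        Filter.limsup (fun n : ℕ =>
          P.toOuterMeasure {ω | ε < dist (Xin i n ω) (X n ω)}) atTop)
        atTop (nhds 0)) :
    WeakConvHJ atTop P X Xlim :=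
  weakConvHJ_of_forall_isClosed_limsup_le hXlim fun F hF =>
    le_measure_preimage_of_forall_cthickening P hXlim hF fun ε hε =>
      limsup_measure_preimage_le_measure_preimage_cthickening hXi hXlim h1 h2 (h3 ε hε) F
end

section
/- Let V(ξ) = ∫₀¹∫₀¹ k(x,y) dξ(x) dξ(y) be defined on the set P of Borel probability measures on [0,1], where k: [0,1]² → ℝ is a continuous symmetric positive semidefinite kernel. Then a probability measure η ∈ P minimizes V over P if and only if ∫₀¹ k(x,y) dη(y) ≥ ∫₀¹∫₀¹ k(x,y) dη(x) dη(y) for all x ∈ [0,1]. -/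
open MeasureTheory Set

/-- The quadratic energy functional `V(ξ) = ∬ k dξ dξ`. -/
noncomputable def Vfun (k : ℝ → ℝ → ℝ) (ξ : Measure ℝ) : ℝ :=
  ∫ x, ∫ y, k x y ∂ξ ∂ξ

/-!
Write `E(α, β) = ∬ k dβ dα`, so that `V(ξ) = E(ξ, ξ)`. Along the segment from `η` towards a
Dirac mass `δₓ` the energy is a quadratic polynomial in the step `t` with slope
`2 (∫ k(x, ·) dη - V(η))` at `t = 0`, so a minimizer satisfies the pointwise criterion.
Conversely, positive semidefiniteness gives `E(ξ, η) + E(η, ξ) ≤ V(ξ) + V(η)` (discretize `ξ`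
and `η` on a uniform grid, which costs little by uniform continuity of `k`), while integrating
the criterion against `ξ` gives `V(η) ≤ E(ξ, η) = E(η, ξ)`; together, `V(η) ≤ V(ξ)`.
Clamping both arguments to `[0, 1]` first makes `k` continuous and bounded on the whole plane
without changing any of these integrals.
-/

theorem nonneg_of_forall_mul_add_sq_mul_nonneg {a b : ℝ}
    (h : ∀ t ∈ Ioc (0 : ℝ) 1, 0 ≤ t * a + t ^ 2 * b) : 0 ≤ a := by
  have hlin : ∀ t ∈ Ioc (0 : ℝ) 1, 0 ≤ a + t * b := fun t ht =>
    (mul_nonneg_iff_of_pos_left ht.1).mp (by linear_combination h t ht)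
  have hlim : Filter.Tendsto (fun t => a + t * b) (nhdsWithin 0 (Ioi 0)) (nhds a) := by
    have hc : Continuous fun t : ℝ => a + t * b := by fun_prop
    simpa using (hc.tendsto 0).mono_left nhdsWithin_le_nhds
  exact ge_of_tendsto hlim (Filter.eventually_of_mem (Ioc_mem_nhdsGT one_pos) hlin)

noncomputable def mutualEnergy {X : Type*} [MeasurableSpace X] (K : X → X → ℝ)
    (α β : Measure X) : ℝ :=
  ∫ x, ∫ y, K x y ∂β ∂α

namespace mutualEnergy

variable {X : Type*} [MeasurableSpace X] {K L : X → X → ℝ} {M : ℝ}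

theorem integrable_kernel (hK : StronglyMeasurable (Function.uncurry K))
    (hKb : ∀ x y, ‖K x y‖ ≤ M) (x : X) (β : Measure X) [IsFiniteMeasure β] :
    Integrable (K x) β :=
  .of_bound (hK.comp_measurable measurable_prodMk_left).aestronglyMeasurable M
    (ae_of_all _ (hKb x))

theorem integrable_potential (hK : StronglyMeasurable (Function.uncurry K))
    (hKb : ∀ x y, ‖K x y‖ ≤ M) (α β : Measure X) [IsFiniteMeasure α] [IsFiniteMeasure β] :
    Integrable (fun x => ∫ y, K x y ∂β) α :=
  .of_bound hK.integral_prod_right'.aestronglyMeasurable (M * β.real univ)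
    (ae_of_all _ fun x => norm_integral_le_of_norm_le_const (ae_of_all _ (hKb x)))

theorem add_left (hK : StronglyMeasurable (Function.uncurry K)) (hKb : ∀ x y, ‖K x y‖ ≤ M)
    (α₁ α₂ β : Measure X) [IsFiniteMeasure α₁] [IsFiniteMeasure α₂] [IsFiniteMeasure β] :
    mutualEnergy K (α₁ + α₂) β = mutualEnergy K α₁ β + mutualEnergy K α₂ β :=
  integral_add_measure (integrable_potential hK hKb α₁ β) (integrable_potential hK hKb α₂ β)

theorem add_right (hK : StronglyMeasurable (Function.uncurry K)) (hKb : ∀ x y, ‖K x y‖ ≤ M)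
    (α β₁ β₂ : Measure X) [IsFiniteMeasure α] [IsFiniteMeasure β₁] [IsFiniteMeasure β₂] :
    mutualEnergy K α (β₁ + β₂) = mutualEnergy K α β₁ + mutualEnergy K α β₂ := by
  unfold mutualEnergy
  rw [← integral_add (integrable_potential hK hKb α β₁) (integrable_potential hK hKb α β₂)]
  exact integral_congr_ae (ae_of_all _ fun x =>
    integral_add_measure (integrable_kernel hK hKb x β₁) (integrable_kernel hK hKb x β₂))

theorem smul_left (c : NNReal) (α β : Measure X) :
    mutualEnergy K (c • α) β = c * mutualEnergy K α β := by
  simp [mutualEnergy, integral_smul_nnreal_measure, NNReal.smul_def]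

theorem smul_right (c : NNReal) (α β : Measure X) :
    mutualEnergy K α (c • β) = c * mutualEnergy K α β := by
  simp [mutualEnergy, integral_smul_nnreal_measure, NNReal.smul_def, integral_const_mul]

theorem dirac_left (hK : StronglyMeasurable (Function.uncurry K)) (x : X) (β : Measure X)
    [SFinite β] : mutualEnergy K (Measure.dirac x) β = ∫ y, K x y ∂β :=
  integral_dirac' _ x hK.integral_prod_right'

theorem dirac_right (hK : StronglyMeasurable (Function.uncurry K)) (α : Measure X) (y : X) :
    mutualEnergy K α (Measure.dirac y) = ∫ x, K x y ∂α :=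
  integral_congr_ae (ae_of_all _ fun _ =>
    integral_dirac' _ y (hK.comp_measurable measurable_prodMk_left))

theorem comm (hK : StronglyMeasurable (Function.uncurry K)) (hKb : ∀ x y, ‖K x y‖ ≤ M)
    (hsymm : ∀ x y, K x y = K y x) (α β : Measure X) [IsFiniteMeasure α] [IsFiniteMeasure β] :
    mutualEnergy K α β = mutualEnergy K β α := by
  unfold mutualEnergy
  rw [integral_integral_swap (.of_bound hK.aestronglyMeasurable M (ae_of_all _ fun p => hKb _ _))]
  simp_rw [hsymm]

theorem add_smul_add_smul (hK : StronglyMeasurable (Function.uncurry K))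
    (hKb : ∀ x y, ‖K x y‖ ≤ M) (a b : NNReal) (α β : Measure X)
    [IsFiniteMeasure α] [IsFiniteMeasure β] :
    mutualEnergy K (a • α + b • β) (a • α + b • β) =
      a ^ 2 * mutualEnergy K α α + a * b * (mutualEnergy K α β + mutualEnergy K β α) +
        b ^ 2 * mutualEnergy K β β := by
  simp only [add_left hK hKb, add_right hK hKb, smul_left, smul_right]
  ring

theorem sub_kernel (hK : StronglyMeasurable (Function.uncurry K)) (hKb : ∀ x y, ‖K x y‖ ≤ M)
    (hL : StronglyMeasurable (Function.uncurry L)) (hLb : ∀ x y, ‖L x y‖ ≤ M)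
    (α β : Measure X) [IsFiniteMeasure α] [IsFiniteMeasure β] :
    mutualEnergy K α β - mutualEnergy L α β = mutualEnergy (K - L) α β := by
  unfold mutualEnergy
  rw [← integral_sub (integrable_potential hK hKb α β) (integrable_potential hL hLb α β)]
  exact integral_congr_ae (ae_of_all _ fun x =>
    (integral_sub (integrable_kernel hK hKb x β) (integrable_kernel hL hLb x β)).symm)

theorem abs_le_of_ae_abs_le {ε : ℝ} (α β : Measure X) [IsProbabilityMeasure α]
    [IsProbabilityMeasure β] (h : ∀ᵐ x ∂α, ∀ᵐ y ∂β, |K x y| ≤ ε) :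
    |mutualEnergy K α β| ≤ ε := by
  have hinner : ∀ᵐ x ∂α, ‖∫ y, K x y ∂β‖ ≤ ε := h.mono fun x hx => by
    simpa using norm_integral_le_of_norm_le_const (μ := β) (f := K x) (by simpa using hx)
  simpa [mutualEnergy] using norm_integral_le_of_norm_le_const hinner

open unitInterval in
theorem le_potential_of_le_segment (hK : StronglyMeasurable (Function.uncurry K))
    (hKb : ∀ x y, ‖K x y‖ ≤ M) (hsymm : ∀ x y, K x y = K y x) (η : Measure X)
    [IsProbabilityMeasure η] (x₀ : X)
    (hmin : ∀ p : I, mutualEnergy K η η ≤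
      mutualEnergy K (toNNReal p • Measure.dirac x₀ + toNNReal (σ p) • η)
        (toNNReal p • Measure.dirac x₀ + toNNReal (σ p) • η)) :
    mutualEnergy K η η ≤ ∫ y, K x₀ y ∂η := by
  have hηδ : mutualEnergy K η (Measure.dirac x₀) = ∫ y, K x₀ y ∂η :=
    (dirac_right hK η x₀).trans (integral_congr_ae (ae_of_all _ fun y => hsymm y x₀))
  have hδη : mutualEnergy K (Measure.dirac x₀) η = ∫ y, K x₀ y ∂η := dirac_left hK x₀ η
  have hδδ : mutualEnergy K (Measure.dirac x₀) (Measure.dirac x₀) = K x₀ x₀ := by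
    rw [dirac_left hK]
    exact integral_dirac' (K x₀) x₀ (hK.comp_measurable measurable_prodMk_left)
  suffices 0 ≤ 2 * ((∫ y, K x₀ y ∂η) - mutualEnergy K η η) by linarith
  refine nonneg_of_forall_mul_add_sq_mul_nonneg
    (b := mutualEnergy K η η - 2 * ∫ y, K x₀ y ∂η + K x₀ x₀) ?_
  rintro t ⟨ht0, ht1⟩
  have h := hmin ⟨t, ht0.le, ht1⟩
  rw [add_smul_add_smul hK hKb, hηδ, hδη, hδδ] at h
  simp only [coe_toNNReal, coe_symm_eq] at h
  linear_combination h

theorem le_of_le_potential (hK : StronglyMeasurable (Function.uncurry K))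
    (hKb : ∀ x y, ‖K x y‖ ≤ M) (hsymm : ∀ x y, K x y = K y x) (ξ η : Measure X)
    [IsProbabilityMeasure ξ] [IsProbabilityMeasure η]
    (hcross : mutualEnergy K ξ η + mutualEnergy K η ξ ≤ mutualEnergy K ξ ξ + mutualEnergy K η η)
    (hpot : ∀ᵐ x ∂ξ, mutualEnergy K η η ≤ ∫ y, K x y ∂η) :
    mutualEnergy K η η ≤ mutualEnergy K ξ ξ := by
  have h : mutualEnergy K η η ≤ mutualEnergy K ξ η := by
    simpa [mutualEnergy] using
      integral_mono_ae (integrable_const _) (integrable_potential hK hKb ξ η) hpot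
  rw [comm hK hKb hsymm η ξ] at hcross
  linarith

end mutualEnergy

section Finite

variable {ι : Type*} [Fintype ι] [MeasurableSpace ι] [MeasurableSingletonClass ι]

theorem mutualEnergy_eq_sum (K : ι → ι → ℝ) (α β : Measure ι) [IsFiniteMeasure α]
    [IsFiniteMeasure β] :
    mutualEnergy K α β = ∑ i, ∑ j, α.real {i} * β.real {j} * K i j := by
  simp [mutualEnergy, integral_fintype, Finset.mul_sum, mul_assoc]

theorem mutualEnergy_cross_le_of_fintype {K : ι → ι → ℝ}
    (hK : ∀ c : ι → ℝ, 0 ≤ ∑ i, ∑ j, c i * c j * K i j) (α β : Measure ι) [IsFiniteMeasure α]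
    [IsFiniteMeasure β] :
    mutualEnergy K α β + mutualEnergy K β α ≤ mutualEnergy K α α + mutualEnergy K β β := by
  have h := hK fun i => α.real {i} - β.real {i}
  simp only [sub_mul, mul_sub, Finset.sum_sub_distrib] at h
  simp only [mutualEnergy_eq_sum]
  linarith

end Finite

theorem mutualEnergy_map {X Y : Type*} [MeasurableSpace X] [MeasurableSpace Y] {f : X → Y}
    (hf : Measurable f) {L : Y → Y → ℝ} (hL : StronglyMeasurable (Function.uncurry L))
    (α β : Measure X) [SFinite β] :
    mutualEnergy L (α.map f) (β.map f) = mutualEnergy (fun x y => L (f x) (f y)) α β := by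
  unfold mutualEnergy
  rw [integral_map (f := fun y => ∫ y', L y y' ∂β.map f) hf.aemeasurable
    hL.integral_prod_right'.aestronglyMeasurable]
  exact integral_congr_ae (ae_of_all _ fun x => integral_map hf.aemeasurable
    (hL.comp_measurable measurable_prodMk_left).aestronglyMeasurable)

/-- `Fin.ofNat` reduces modulo `N + 1`, which does nothing on `[0, 1]`, where `⌊N x⌋₊ ≤ N`. -/
noncomputable def gridIndex (N : ℕ) (x : ℝ) : Fin (N + 1) := Fin.ofNat (N + 1) ⌊N * x⌋₊

noncomputable def gridNode (N : ℕ) (i : Fin (N + 1)) : ℝ := i / N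

theorem measurable_gridIndex (N : ℕ) : Measurable (gridIndex N) :=
  measurable_from_nat.comp (measurable_const.mul measurable_id).nat_floor

theorem gridNode_mem_Icc (N : ℕ) (i : Fin (N + 1)) : gridNode N i ∈ Icc (0 : ℝ) 1 :=
  ⟨by unfold gridNode; positivity, div_le_one_of_le₀ (by exact_mod_cast i.is_le) N.cast_nonneg⟩

theorem abs_sub_gridNode_gridIndex_le {N : ℕ} (hN : 0 < N) {x : ℝ} (hx : x ∈ Icc (0 : ℝ) 1) :
    |x - gridNode N (gridIndex N x)| ≤ 1 / N := by
  have hN' : (0 : ℝ) < N := by exact_mod_cast hN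
  have hfloor : ⌊(N : ℝ) * x⌋₊ ≤ N := Nat.floor_le_of_le (by nlinarith [hx.2])
  have hval : ((gridIndex N x : ℕ) : ℝ) = ⌊(N : ℝ) * x⌋₊ := by
    simp [gridIndex, Nat.mod_eq_of_lt (Nat.lt_succ_of_le hfloor)]
  have h₁ := Nat.floor_le (mul_nonneg hN'.le hx.1)
  have h₂ := Nat.lt_floor_add_one ((N : ℝ) * x)
  rw [gridNode, hval, show x - ⌊(N : ℝ) * x⌋₊ / N = (N * x - ⌊(N : ℝ) * x⌋₊) / N by field_simp,
    abs_div, abs_of_pos hN', div_le_div_iff_of_pos_right hN', abs_le]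
  constructor <;> linarith

theorem exists_gridNode_approx {K : ℝ → ℝ → ℝ} (hK : Continuous (Function.uncurry K)) {ε : ℝ}
    (hε : 0 < ε) : ∃ N : ℕ, ∀ x ∈ Icc (0 : ℝ) 1, ∀ y ∈ Icc (0 : ℝ) 1,
      |K x y - K (gridNode N (gridIndex N x)) (gridNode N (gridIndex N y))| ≤ ε := by
  obtain ⟨δ, hδ, hKδ⟩ := Metric.uniformContinuousOn_iff.mp
    ((isCompact_Icc.prod isCompact_Icc).uniformContinuousOn_of_continuous hK.continuousOn) ε hε
  obtain ⟨n, hn⟩ := exists_nat_one_div_lt hδ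
  have hclose : ∀ x ∈ Icc (0 : ℝ) 1, dist x (gridNode (n + 1) (gridIndex (n + 1) x)) < δ :=
    fun x hx => (abs_sub_gridNode_gridIndex_le n.succ_pos hx).trans_lt (by exact_mod_cast hn)
  refine ⟨n + 1, fun x hx y hy => (hKδ (x, y) ⟨hx, hy⟩ (_, _) ⟨gridNode_mem_Icc _ _,
    gridNode_mem_Icc _ _⟩ (max_lt (hclose x hx) (hclose y hy))).le⟩

theorem mutualEnergy_cross_le_of_posSemidef {K : ℝ → ℝ → ℝ} {M : ℝ}
    (hK : Continuous (Function.uncurry K)) (hKb : ∀ x y, ‖K x y‖ ≤ M)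
    (hpsd : ∀ (n : ℕ) (x c : Fin n → ℝ), (∀ i, x i ∈ Icc (0 : ℝ) 1) →
      0 ≤ ∑ i, ∑ j, c i * c j * K (x i) (x j))
    (ξ η : Measure ℝ) [IsProbabilityMeasure ξ] [IsProbabilityMeasure η]
    (hξ : ξ (Icc (0 : ℝ) 1)ᶜ = 0) (hη : η (Icc (0 : ℝ) 1)ᶜ = 0) :
    mutualEnergy K ξ η + mutualEnergy K η ξ ≤ mutualEnergy K ξ ξ + mutualEnergy K η η := by
  refine le_of_forall_pos_le_add fun ε hε => ?_
  obtain ⟨N, hN⟩ := exists_gridNode_approx hK (ε := ε / 4) (by positivity)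
  set L : Fin (N + 1) → Fin (N + 1) → ℝ := fun i j => K (gridNode N i) (gridNode N j)
  set KN : ℝ → ℝ → ℝ := fun x y => L (gridIndex N x) (gridIndex N y)
  have hL : StronglyMeasurable (Function.uncurry L) :=
    (measurable_of_countable _).stronglyMeasurable
  have hKN : StronglyMeasurable (Function.uncurry KN) :=
    ((measurable_of_countable (Function.uncurry L)).comp
      ((measurable_gridIndex N).prodMap (measurable_gridIndex N))).stronglyMeasurable
  have happrox : ∀ (α β : Measure ℝ) [IsProbabilityMeasure α] [IsProbabilityMeasure β],
      α (Icc (0 : ℝ) 1)ᶜ = 0 → β (Icc (0 : ℝ) 1)ᶜ = 0 →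
      |mutualEnergy K α β - mutualEnergy KN α β| ≤ ε / 4 := by
    intro α β _ _ hα hβ
    rw [mutualEnergy.sub_kernel hK.stronglyMeasurable hKb hKN (fun _ _ => hKb _ _)]
    refine mutualEnergy.abs_le_of_ae_abs_le α β ?_
    filter_upwards [mem_ae_iff.mpr hα] with x hx
    filter_upwards [mem_ae_iff.mpr hβ] with y hy
    exact hN x hx y hy
  have hgrid : mutualEnergy KN ξ η + mutualEnergy KN η ξ ≤
      mutualEnergy KN ξ ξ + mutualEnergy KN η η := by
    simp only [KN, ← mutualEnergy_map (measurable_gridIndex N) hL]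
    exact mutualEnergy_cross_le_of_fintype
      (fun c => hpsd _ _ c fun i => gridNode_mem_Icc N i) _ _
  have h₁ := abs_le.mp (happrox ξ η hξ hη)
  have h₂ := abs_le.mp (happrox η ξ hη hξ)
  have h₃ := abs_le.mp (happrox ξ ξ hξ hξ)
  have h₄ := abs_le.mp (happrox η η hη hη)
  linarith [h₁.1, h₁.2, h₂.1, h₂.2, h₃.1, h₃.2, h₄.1, h₄.2]

noncomputable def extendUnitSquare (k : ℝ → ℝ → ℝ) (x y : ℝ) : ℝ :=
  k (projIcc 0 1 zero_le_one x) (projIcc 0 1 zero_le_one y)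

section extendUnitSquare

variable {k : ℝ → ℝ → ℝ}

theorem extendUnitSquare_of_mem {x y : ℝ} (hx : x ∈ Icc (0 : ℝ) 1) (hy : y ∈ Icc (0 : ℝ) 1) :
    extendUnitSquare k x y = k x y := by
  simp [extendUnitSquare, projIcc_of_mem _ hx, projIcc_of_mem _ hy]

theorem extendUnitSquare_comm (hsymm : ∀ x ∈ Icc (0 : ℝ) 1, ∀ y ∈ Icc (0 : ℝ) 1, k x y = k y x)
    (x y : ℝ) : extendUnitSquare k x y = extendUnitSquare k y x :=
  hsymm _ (projIcc 0 1 zero_le_one x).2 _ (projIcc 0 1 zero_le_one y).2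

theorem continuous_extendUnitSquare
    (hk : ContinuousOn (fun p : ℝ × ℝ => k p.1 p.2) (Icc 0 1 ×ˢ Icc 0 1)) :
    Continuous (Function.uncurry (extendUnitSquare k)) := by
  have hπ : Continuous fun x : ℝ => (projIcc (0 : ℝ) 1 zero_le_one x : ℝ) :=
    continuous_subtype_val.comp continuous_projIcc
  exact hk.comp_continuous ((hπ.comp continuous_fst).prodMk (hπ.comp continuous_snd))
    fun p => ⟨(projIcc 0 1 zero_le_one p.1).2, (projIcc 0 1 zero_le_one p.2).2⟩

theorem exists_norm_extendUnitSquare_le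
    (hk : ContinuousOn (fun p : ℝ × ℝ => k p.1 p.2) (Icc 0 1 ×ˢ Icc 0 1)) :
    ∃ M, ∀ x y, ‖extendUnitSquare k x y‖ ≤ M := by
  obtain ⟨M, hM⟩ := (isCompact_Icc.prod isCompact_Icc).exists_bound_of_continuousOn hk
  exact ⟨M, fun x y => hM (_, _) ⟨(projIcc 0 1 zero_le_one x).2, (projIcc 0 1 zero_le_one y).2⟩⟩

theorem mutualEnergy_extendUnitSquare {α β : Measure ℝ} (hα : α (Icc (0 : ℝ) 1)ᶜ = 0)
    (hβ : β (Icc (0 : ℝ) 1)ᶜ = 0) :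
    mutualEnergy (extendUnitSquare k) α β = mutualEnergy k α β := by
  refine integral_congr_ae ?_
  filter_upwards [mem_ae_iff.mpr hα] with x hx
  refine integral_congr_ae ?_
  filter_upwards [mem_ae_iff.mpr hβ] with y hy
  exact extendUnitSquare_of_mem hx hy

theorem integral_extendUnitSquare {x : ℝ} (hx : x ∈ Icc (0 : ℝ) 1) {β : Measure ℝ}
    (hβ : β (Icc (0 : ℝ) 1)ᶜ = 0) :
    ∫ y, extendUnitSquare k x y ∂β = ∫ y, k x y ∂β := by
  refine integral_congr_ae ?_
  filter_upwards [mem_ae_iff.mpr hβ] with y hy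
  exact extendUnitSquare_of_mem hx hy

end extendUnitSquare

theorem stmt17 (k : ℝ → ℝ → ℝ)
    (hk : ContinuousOn (fun p : ℝ × ℝ => k p.1 p.2) (Set.Icc 0 1 ×ˢ Set.Icc 0 1))
    (hsymm : ∀ x ∈ Set.Icc (0:ℝ) 1, ∀ y ∈ Set.Icc (0:ℝ) 1, k x y = k y x)
    (hpsd : ∀ (n : ℕ) (x : Fin n → ℝ) (c : Fin n → ℝ),
      (∀ i, x i ∈ Set.Icc (0:ℝ) 1) →
      0 ≤ ∑ i : Fin n, ∑ j : Fin n, c i * c j * k (x i) (x j))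
    (η : Measure ℝ) [IsProbabilityMeasure η] (hη : η (Set.Icc (0:ℝ) 1)ᶜ = 0) :
    (∀ ξ : Measure ℝ, IsProbabilityMeasure ξ → ξ (Set.Icc (0:ℝ) 1)ᶜ = 0 →
      Vfun k η ≤ Vfun k ξ) ↔
    (∀ x ∈ Set.Icc (0:ℝ) 1, Vfun k η ≤ ∫ y, k x y ∂η) := by
  obtain ⟨M, hKb⟩ := exists_norm_extendUnitSquare_le hk
  have hK := continuous_extendUnitSquare hk
  have hKsymm := extendUnitSquare_comm hsymm
  have hV : ∀ ξ : Measure ℝ, ξ (Icc (0 : ℝ) 1)ᶜ = 0 →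
      Vfun k ξ = mutualEnergy (extendUnitSquare k) ξ ξ :=
    fun ξ hξ => (mutualEnergy_extendUnitSquare hξ hξ).symm
  constructor
  · intro hmin x hx
    rw [hV η hη, ← integral_extendUnitSquare hx hη]
    refine mutualEnergy.le_potential_of_le_segment hK.stronglyMeasurable hKb hKsymm η x
      fun p => ?_
    have hsupp : (unitInterval.toNNReal p • Measure.dirac x +
        unitInterval.toNNReal (unitInterval.symm p) • η) (Icc (0 : ℝ) 1)ᶜ = 0 := by
      simp [hη, hx]
    rw [← hV η hη, ← hV _ hsupp]
    exact hmin _ inferInstance hsupp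
  · intro hpot ξ _ hξ
    rw [hV η hη, hV ξ hξ]
    refine mutualEnergy.le_of_le_potential hK.stronglyMeasurable hKb hKsymm ξ η
      (mutualEnergy_cross_le_of_posSemidef hK hKb (fun n x c hx => ?_) ξ η hξ hη) ?_
    · simpa only [extendUnitSquare_of_mem (hx _) (hx _)] using hpsd n x c hx
    · filter_upwards [mem_ae_iff.mpr hξ] with x hx
      rw [integral_extendUnitSquare hx hη, ← hV η hη]
      exact hpot x hx
end
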